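/- arXiv:1504.00350 — 9 statements merged into one kernel-verified Lean document; each statement's English description precedes it below -/
import Mathlib

section
/- For any d×d real symmetric matrices A and B and any k ≤ d, the expectation over Haar-random orthogonal matrices Q of e_k(A Q B Qᵀ) equals e_k(A) e_k(B) / C(d,k), where e_k denotes the k-th elementary symmetric polynomial of the eigenvalues (equivalently the sum of k×k principal minors). -/
open MeasureTheory Matrix Finset

/-- `e_k(M)`: the sum of the `k × k` principal minors of `M`, i.e. the `k`-th
elementary symmetric polynomial of the eigenvalues of `M`. -/
noncomputable def principalMinorSum (d k : ℕ) (M : Matrix (Fin d) (Fin d) ℝ) : ℝ :=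
  ∑ S ∈ Finset.univ.powersetCard k,
    @Matrix.det {x // x ∈ S} (Classical.decEq _) (FinsetCoe.fintype S) ℝ _
      (M.submatrix (fun i => i.1) (fun i => i.1))

section
open Equiv Equiv.Perm Function
namespace ExpEsymmAux
variable {d k : ℕ}

local notation "ε " σ:arg => ((Equiv.Perm.sign σ : ℤ) : ℝ)

noncomputable def idx (hk : k ≤ d) (S : Finset (Fin d)) (i : Fin k) : Fin d :=
  if h : S.card = k then S.orderEmbOfFin h i else Fin.castLE hk i

lemma idx_eq (hk : k ≤ d) {S : Finset (Fin d)} (h : S.card = k) (i : Fin k) :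
    idx hk S i = S.orderEmbOfFin h i := dif_pos h

lemma idx_inj (hk : k ≤ d) {S : Finset (Fin d)} (h : S.card = k) :
    Function.Injective (idx hk S) := by
  intro i j hij
  rw [idx_eq hk h, idx_eq hk h] at hij
  exact (S.orderEmbOfFin h).injective hij

lemma idx_mem (hk : k ≤ d) {S : Finset (Fin d)} (h : S.card = k) (i : Fin k) :
    idx hk S i ∈ S := by
  rw [idx_eq hk h]; exact S.orderEmbOfFin_mem h i

lemma exists_perm_comp (hk : k ≤ d) {S : Finset (Fin d)} (hS : S.card = k)
    {p : Fin k → Fin d} (hp : Function.Injective p) (hmem : ∀ i, p i ∈ S) :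
    ∃ τ : Equiv.Perm (Fin k), ∀ i, p i = idx hk S (τ i) := by
  have hginj : Function.Injective
      (fun i : Fin k => (S.orderIsoOfFin hS).symm ⟨p i, hmem i⟩) := fun a b hab =>
    hp (congrArg Subtype.val ((S.orderIsoOfFin hS).symm.toEquiv.injective hab))
  refine ⟨Equiv.ofBijective _ (Finite.injective_iff_bijective.mp hginj), fun i => ?_⟩
  rw [idx_eq hk hS, ← Finset.coe_orderIsoOfFin_apply]
  simp [Equiv.ofBijective_apply]

theorem det_mul_aux' {A : Matrix (Fin k) (Fin d) ℝ} {B : Matrix (Fin d) (Fin k) ℝ}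
    {p : Fin k → Fin d} (H : ¬Function.Injective p) :
    (∑ σ : Perm (Fin k), ε σ * ∏ x, A (σ x) (p x) * B (p x) x) = 0 := by
  obtain ⟨i, j, hpij, hij⟩ : ∃ i j, p i = p j ∧ i ≠ j := by
    rw [Injective] at H
    push_neg at H
    exact H
  exact
    sum_involution (fun σ _ => σ * Equiv.swap i j)
      (fun σ _ => by
        have : (∏ x, A (σ x) (p x)) = ∏ x, A ((σ * Equiv.swap i j) x) (p x) :=
          Fintype.prod_equiv (swap i j) _ _ (by simp [apply_swap_eq_self hpij])
        simp [this, sign_swap hij, -sign_swap', prod_mul_distrib])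
      (fun σ _ _ => (not_congr mul_swap_eq_iff).mpr hij) (fun _ _ => mem_univ _) fun σ _ =>
      mul_swap_involutive i j σ

lemma sum_sum_perm (M N : Matrix (Fin k) (Fin k) ℝ) :
    ∑ τ : Perm (Fin k), ∑ σ : Perm (Fin k), ε σ * ∏ i, M (σ i) (τ i) * N (τ i) i
      = M.det * N.det :=
  calc
    ∑ τ : Perm (Fin k), ∑ σ : Perm (Fin k), ε σ * ∏ i, M (σ i) (τ i) * N (τ i) i
      = ∑ σ : Perm (Fin k), ∑ τ : Perm (Fin k),
          (∏ i, N (σ i) i) * ε τ * ∏ j, M (τ j) (σ j) := by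
        simp only [mul_comm, mul_left_comm, prod_mul_distrib, mul_assoc]
    _ = ∑ σ : Perm (Fin k), ∑ τ : Perm (Fin k),
          (∏ i, N (σ i) i) * (ε σ * ε τ) * ∏ i, M (τ i) i :=
      (sum_congr rfl fun σ _ =>
        Fintype.sum_equiv (Equiv.mulRight σ⁻¹) _ _ fun τ => by
          have : (∏ j, M (τ j) (σ j)) = ∏ j, M ((τ * σ⁻¹) j) j := by
            rw [← (σ⁻¹ : _ ≃ _).prod_comp]
            simp only [Equiv.Perm.coe_mul, Equiv.Perm.inv_def, Equiv.apply_symm_apply, Function.comp_apply]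
          have h : ε σ * ε (τ * σ⁻¹) = ε τ :=
            calc
              ε σ * ε (τ * σ⁻¹) = ε (τ * σ⁻¹ * σ) := by
                rw [mul_comm, sign_mul (τ * σ⁻¹)]
                simp only [Int.cast_mul, Units.val_mul]
              _ = ε τ := by simp only [inv_mul_cancel_right]
          simp_rw [Equiv.coe_mulRight, h]
          simp only [this])
    _ = M.det * N.det := by
      simp only [det_apply', Finset.mul_sum, mul_comm, mul_left_comm, mul_assoc]

theorem cauchyBinet (hk : k ≤ d) (A : Matrix (Fin k) (Fin d) ℝ) (B : Matrix (Fin d) (Fin k) ℝ) :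
    (A * B).det = ∑ S ∈ Finset.univ.powersetCard k,
      (A.submatrix id (idx hk S)).det * (B.submatrix (idx hk S) id).det :=
  calc
    (A * B).det
      = ∑ p : Fin k → Fin d, ∑ σ : Perm (Fin k), ε σ * ∏ i, A (σ i) (p i) * B (p i) i := by
        simp only [det_apply', Matrix.mul_apply, prod_univ_sum, mul_sum, Fintype.piFinset_univ]
        rw [Finset.sum_comm]
    _ = ∑ p ∈ (univ : Finset (Fin k → Fin d)).filter Function.Injective,
          ∑ σ : Perm (Fin k), ε σ * ∏ i, A (σ i) (p i) * B (p i) i := by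
        refine (sum_subset (filter_subset _ _) fun f _ hinj => det_mul_aux' ?_).symm
        simpa using hinj
    _ = ∑ x ∈ (Finset.univ.powersetCard k) ×ˢ (univ : Finset (Perm (Fin k))),
          ∑ σ : Perm (Fin k), ε σ * ∏ i, A (σ i) (idx hk x.1 (x.2 i)) * B (idx hk x.1 (x.2 i)) i := by
        refine (Finset.sum_bij (fun x _ => idx hk x.1 ∘ x.2) ?_ ?_ ?_ ?_).symm
        · rintro ⟨S, τ⟩ hx
          have hS : S.card = k := by
            simpa using Finset.mem_powersetCard_univ.mp (Finset.mem_product.mp hx).1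
          simp only [Finset.mem_filter, Finset.mem_univ, true_and]
          exact (idx_inj hk hS).comp τ.injective
        · rintro ⟨S, τ⟩ hx ⟨S', τ'⟩ hx' heq
          have hS : S.card = k := by
            simpa using Finset.mem_powersetCard_univ.mp (Finset.mem_product.mp hx).1
          have hS' : S'.card = k := by
            simpa using Finset.mem_powersetCard_univ.mp (Finset.mem_product.mp hx').1
          have himg : ∀ (T : Finset (Fin d)) (hT : T.card = k) (ρ : Perm (Fin k)),
              Finset.univ.image (idx hk T ∘ ρ) = T := by
            intro T hT ρ
            apply Finset.eq_of_subset_of_card_le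
            · intro a ha
              obtain ⟨i, _, rfl⟩ := Finset.mem_image.mp ha
              exact idx_mem hk hT _
            · rw [Finset.card_image_of_injective _ ((idx_inj hk hT).comp ρ.injective)]
              simp [hT]
          have heq' : idx hk S ∘ τ = idx hk S' ∘ τ' := heq
          have hSS' : S = S' := by
            rw [← himg S hS τ, ← himg S' hS' τ', heq']
          subst hSS'
          have hττ' : τ = τ' := by
            ext i
            exact congrArg Fin.val (idx_inj hk hS (congrFun heq' i))
          simp [hττ']
        · intro p hp
          have hpinj : Function.Injective p := (Finset.mem_filter.mp hp).2
          have hcard : (Finset.univ.image p).card = k := by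
            rw [Finset.card_image_of_injective _ hpinj]
            simp
          obtain ⟨τ, hτ⟩ := exists_perm_comp hk hcard hpinj
            (fun i => Finset.mem_image_of_mem p (Finset.mem_univ i))
          refine ⟨⟨Finset.univ.image p, τ⟩, ?_, ?_⟩
          · simp [Finset.mem_product, Finset.mem_powersetCard_univ, hcard]
          · funext i
            exact (hτ i).symm
        · rintro ⟨S, τ⟩ _
          rfl
    _ = ∑ S ∈ Finset.univ.powersetCard k, ∑ τ : Perm (Fin k),
          ∑ σ : Perm (Fin k), ε σ * ∏ i, A (σ i) (idx hk S (τ i)) * B (idx hk S (τ i)) i := by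
      rw [Finset.sum_product]
    _ = ∑ S ∈ Finset.univ.powersetCard k,
          (A.submatrix id (idx hk S)).det * (B.submatrix (idx hk S) id).det :=
      Finset.sum_congr rfl fun S _ =>
        sum_sum_perm (A.submatrix id (idx hk S)) (B.submatrix (idx hk S) id)


/-- The `k×k` minor. -/
noncomputable def minor (hk : k ≤ d) (M : Matrix (Fin d) (Fin d) ℝ) (S T : Finset (Fin d)) : ℝ :=
  (M.submatrix (idx hk S) (idx hk T)).det

lemma minor_transpose (hk : k ≤ d) (M : Matrix (Fin d) (Fin d) ℝ) (S T : Finset (Fin d)) :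
    minor hk Mᵀ S T = minor hk M T S := by
  unfold minor
  rw [← Matrix.transpose_submatrix, Matrix.det_transpose]

lemma minor_mul (hk : k ≤ d) (M N : Matrix (Fin d) (Fin d) ℝ) (S T : Finset (Fin d)) :
    minor hk (M * N) S T = ∑ U ∈ Finset.univ.powersetCard k, minor hk M S U * minor hk N U T := by
  have h : (M * N).submatrix (idx hk S) (idx hk T)
      = (M.submatrix (idx hk S) id) * (N.submatrix id (idx hk T)) := by
    ext i j; simp [Matrix.mul_apply, Matrix.submatrix_apply]
  unfold minor
  rw [h, cauchyBinet hk]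
  refine Finset.sum_congr rfl fun U _ => ?_
  rw [Matrix.submatrix_submatrix, Matrix.submatrix_submatrix]
  simp [Function.comp_def]

lemma minor_one (hk : k ≤ d) {U V : Finset (Fin d)} (hU : U.card = k) (hV : V.card = k) :
    minor hk (1 : Matrix (Fin d) (Fin d) ℝ) U V = if U = V then 1 else 0 := by
  by_cases h : U = V
  · subst h
    rw [if_pos rfl]
    unfold minor
    have h1 : (1 : Matrix (Fin d) (Fin d) ℝ).submatrix (idx hk U) (idx hk U) = 1 := by
      ext i j
      simp [Matrix.one_apply, Matrix.submatrix_apply, (idx_inj hk hU).eq_iff]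
    rw [h1, Matrix.det_one]
  · rw [if_neg h]
    have hns : ¬ U ⊆ V := fun hsub => h (Finset.eq_of_subset_of_card_le hsub (by rw [hU, hV]))
    obtain ⟨a, haU, haV⟩ := Finset.not_subset.mp hns
    apply Matrix.det_eq_zero_of_row_eq_zero ((U.orderIsoOfFin hU).symm ⟨a, haU⟩)
    intro j
    have ha : idx hk U ((U.orderIsoOfFin hU).symm ⟨a, haU⟩) = a := by
      rw [idx_eq hk hU, ← Finset.coe_orderIsoOfFin_apply]; simp
    rw [Matrix.submatrix_apply, ha, Matrix.one_apply, if_neg]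
    intro hcon
    exact haV (hcon ▸ idx_mem hk hV j)

lemma minor_rowScale (hk : k ≤ d) (v : Fin d → ℝ) (M : Matrix (Fin d) (Fin d) ℝ)
    (S T : Finset (Fin d)) :
    minor hk (Matrix.of fun a b => v a * M a b) S T
      = (∏ i : Fin k, v (idx hk S i)) * minor hk M S T := by
  unfold minor
  have h : (Matrix.of fun a b => v a * M a b).submatrix (idx hk S) (idx hk T)
      = Matrix.of (fun i j => v (idx hk S i) * (M.submatrix (idx hk S) (idx hk T)) i j) := rfl
  rw [h, Matrix.det_mul_column]

lemma prod_idx_ite (hk : k ≤ d) {S : Finset (Fin d)} (h : S.card = k) (i : Fin d) (c : ℝ) :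
    (∏ r : Fin k, if idx hk S r = i then c else 1) = if i ∈ S then c else 1 := by
  by_cases hi : i ∈ S
  · have hr₀ : idx hk S ((S.orderIsoOfFin h).symm ⟨i, hi⟩) = i := by
      rw [idx_eq hk h, ← Finset.coe_orderIsoOfFin_apply]; simp
    rw [if_pos hi, Fintype.prod_eq_single ((S.orderIsoOfFin h).symm ⟨i, hi⟩) ?_]
    · rw [if_pos hr₀]
    · intro r hr
      rw [if_neg]
      intro hcon
      exact hr (idx_inj hk h (hcon.trans hr₀.symm))
  · rw [if_neg hi, Finset.prod_eq_one]
    intro r _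
    rw [if_neg]
    intro hcon
    exact hi (hcon ▸ idx_mem hk h r)

lemma exists_rowPerm (hk : k ≤ d) (σ : Perm (Fin d)) {T T' : Finset (Fin d)}
    (hT : T.card = k) (hT' : T'.card = k) (him : ∀ i ∈ T', σ i ∈ T) :
    ∃ τ : Perm (Fin k), ∀ i, σ (idx hk T' i) = idx hk T (τ i) :=
  exists_perm_comp hk hT (σ.injective.comp (idx_inj hk hT'))
    (fun i => him _ (idx_mem hk hT' i))

lemma minor_of_comp (hk : k ≤ d) (M : Matrix (Fin d) (Fin d) ℝ) (σ : Perm (Fin d))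
    {T T' : Finset (Fin d)} (τ : Perm (Fin k))
    (hτ : ∀ i, σ (idx hk T' i) = idx hk T (τ i)) (U : Finset (Fin d)) :
    minor hk (Matrix.of fun a b => M (σ a) b) T' U
      = ((Equiv.Perm.sign τ : ℤ) : ℝ) * minor hk M T U := by
  unfold minor
  have h : (Matrix.of fun a b => M (σ a) b).submatrix (idx hk T') (idx hk U)
      = (M.submatrix (idx hk T) (idx hk U)).submatrix τ id := by
    ext i j
    simp [Matrix.submatrix_apply, hτ]
  rw [h, Matrix.det_permute]


lemma star_eq_transpose (M : Matrix (Fin d) (Fin d) ℝ) : star M = Mᵀ := by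
  ext i j
  simp [Matrix.star_apply]

/-- The diagonal sign matrix flipping coordinate `i`. -/
def sgnMat (i : Fin d) : Matrix (Fin d) (Fin d) ℝ :=
  Matrix.diagonal (fun j => if j = i then -1 else 1)

lemma sgnMat_mem (i : Fin d) : sgnMat i ∈ Matrix.orthogonalGroup (Fin d) ℝ := by
  rw [Matrix.mem_orthogonalGroup_iff]
  unfold sgnMat
  rw [Matrix.diagonal_transpose, Matrix.diagonal_mul_diagonal]
  have h : (fun j => (if j = i then (-1 : ℝ) else 1) * (if j = i then -1 else 1))
      = fun _ => (1 : ℝ) := by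
    funext j
    by_cases h : j = i <;> simp [h]
  rw [h, Matrix.diagonal_one]

lemma sgnMat_mul (i : Fin d) (Q : Matrix (Fin d) (Fin d) ℝ) :
    sgnMat i * Q = Matrix.of fun a b => (if a = i then (-1 : ℝ) else 1) * Q a b := by
  ext a b
  simp [sgnMat, Matrix.diagonal_mul]

/-- Permutation matrix. -/
def permMat (σ : Equiv.Perm (Fin d)) : Matrix (Fin d) (Fin d) ℝ :=
  Matrix.of fun a b => if b = σ a then 1 else 0

lemma permMat_mul (σ : Equiv.Perm (Fin d)) (Q : Matrix (Fin d) (Fin d) ℝ) :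
    permMat σ * Q = Matrix.of fun a b => Q (σ a) b := by
  ext a b
  simp [permMat, Matrix.mul_apply]

lemma permMat_mem (σ : Equiv.Perm (Fin d)) : permMat σ ∈ Matrix.orthogonalGroup (Fin d) ℝ := by
  rw [Matrix.mem_orthogonalGroup_iff']
  ext a b
  simp only [Matrix.mul_apply, Matrix.transpose_apply, permMat, Matrix.of_apply,
    Matrix.one_apply]
  rw [Fintype.sum_equiv σ
    (fun c => (if a = σ c then (1 : ℝ) else 0) * (if b = σ c then 1 else 0))
    (fun c => (if a = c then (1 : ℝ) else 0) * (if b = c then 1 else 0))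
    (fun c => rfl)]
  · simp only [ite_mul, one_mul, zero_mul]
    rw [Finset.sum_ite_eq]
    simp [eq_comm]

lemma exists_perm_image {T T' : Finset (Fin d)} (h : T.card = T'.card) :
    ∃ σ : Equiv.Perm (Fin d), ∀ a ∈ T, σ a ∈ T' := by
  classical
  have hc : Fintype.card {x // ¬ x ∈ T} = Fintype.card {x // ¬ x ∈ T'} := by
    rw [Fintype.card_subtype_compl, Fintype.card_subtype_compl]
    have h1 : Fintype.card {x // x ∈ T} = T.card := Fintype.card_coe T
    have h2 : Fintype.card {x // x ∈ T'} = T'.card := Fintype.card_coe T'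
    rw [h1, h2, h]
  have hcc : Fintype.card {x // x ∈ T} = Fintype.card {x // x ∈ T'} := by
    rw [Fintype.card_coe, Fintype.card_coe, h]
  let e1 : {x // x ∈ T} ≃ {x // x ∈ T'} := Fintype.equivOfCardEq hcc
  let e2 : {x // ¬ x ∈ T} ≃ {x // ¬ x ∈ T'} := Fintype.equivOfCardEq hc
  refine ⟨(Equiv.sumCompl (· ∈ T)).symm.trans ((e1.sumCongr e2).trans
    (Equiv.sumCompl (· ∈ T'))), fun a ha => ?_⟩
  simp only [Equiv.trans_apply, Equiv.sumCompl_symm_apply_of_pos ha, Equiv.sumCongr_apply,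
    Sum.map_inl, Equiv.sumCompl_apply_inl]
  exact (e1 ⟨a, ha⟩).prop


lemma continuous_minorQ (hk : k ≤ d) (S T : Finset (Fin d)) :
    Continuous fun Q : Matrix.orthogonalGroup (Fin d) ℝ =>
      minor hk (Q : Matrix (Fin d) (Fin d) ℝ) S T := by
  unfold minor
  exact (Continuous.matrix_submatrix continuous_subtype_val _ _).matrix_det

lemma entry_le (Q : Matrix.orthogonalGroup (Fin d) ℝ) (a b : Fin d) :
    |(Q : Matrix (Fin d) (Fin d) ℝ) a b| ≤ 1 := by
  have h := entry_norm_bound_of_unitary Q.prop a b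
  simpa [Real.norm_eq_abs] using h

lemma abs_det_le {M : Matrix (Fin k) (Fin k) ℝ} (h : ∀ i j, |M i j| ≤ 1) :
    |M.det| ≤ (Nat.factorial k : ℝ) := by
  rw [Matrix.det_apply']
  calc |∑ σ : Perm (Fin k), ε σ * ∏ i, M (σ i) i|
      ≤ ∑ σ : Perm (Fin k), |ε σ * ∏ i, M (σ i) i| := Finset.abs_sum_le_sum_abs _ _
    _ ≤ ∑ _σ : Perm (Fin k), (1 : ℝ) := by
        refine Finset.sum_le_sum fun σ _ => ?_
        rw [abs_mul]
        have h1 : |((Equiv.Perm.sign σ : ℤ) : ℝ)| = 1 := by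
          rcases Int.units_eq_one_or (Equiv.Perm.sign σ) with hs | hs <;> rw [hs] <;> norm_num
        rw [h1, one_mul, Finset.abs_prod]
        refine Finset.prod_le_one (fun i _ => abs_nonneg _) (fun i _ => h _ _)
    _ = (Nat.factorial k : ℝ) := by
        simp [Finset.card_univ, Fintype.card_perm, Fintype.card_fin]

lemma abs_minor_le (hk : k ≤ d) (Q : Matrix.orthogonalGroup (Fin d) ℝ) (S T : Finset (Fin d)) :
    |minor hk (Q : Matrix (Fin d) (Fin d) ℝ) S T| ≤ (Nat.factorial k : ℝ) :=
  abs_det_le (fun i j => entry_le Q _ _)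

section Measure

variable {m : MeasurableSpace (Matrix.orthogonalGroup (Fin d) ℝ)}
  [BorelSpace (Matrix.orthogonalGroup (Fin d) ℝ)]
  (μ : Measure (Matrix.orthogonalGroup (Fin d) ℝ)) [IsProbabilityMeasure μ]

lemma integrable_cont_bdd (f : Matrix.orthogonalGroup (Fin d) ℝ → ℝ) (hf : Continuous f)
    (C : ℝ) (hC : ∀ x, |f x| ≤ C) : Integrable f μ :=
  ⟨hf.measurable.aestronglyMeasurable,
    MeasureTheory.HasFiniteIntegral.of_bounded (C := C)
      (Filter.Eventually.of_forall (fun x => by simpa [Real.norm_eq_abs] using hC x))⟩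

lemma continuous_mulLeft (P : Matrix.orthogonalGroup (Fin d) ℝ) :
    Continuous fun Q : Matrix.orthogonalGroup (Fin d) ℝ => P * Q := by
  apply Continuous.subtype_mk
  exact continuous_const.matrix_mul continuous_subtype_val

lemma integral_mulLeft
    (hinv : ∀ P : Matrix.orthogonalGroup (Fin d) ℝ,
      MeasurePreserving (fun Q : Matrix.orthogonalGroup (Fin d) ℝ => P * Q) μ μ)
    (P : Matrix.orthogonalGroup (Fin d) ℝ) (f : Matrix.orthogonalGroup (Fin d) ℝ → ℝ) :
    ∫ Q, f (P * Q) ∂μ = ∫ Q, f Q ∂μ := by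
  have hme : MeasurableEmbedding (fun Q : Matrix.orthogonalGroup (Fin d) ℝ => P * Q) := by
    let e : Matrix.orthogonalGroup (Fin d) ℝ ≃ᵐ Matrix.orthogonalGroup (Fin d) ℝ :=
      { toEquiv := Equiv.mulLeft P
        measurable_toFun := (continuous_mulLeft P).measurable
        measurable_invFun := (continuous_mulLeft P⁻¹).measurable }
    exact e.measurableEmbedding
  exact (hinv P).integral_comp hme f

end Measure



lemma det_congr_inst {n : Type*} (i1 i2 : DecidableEq n) (j1 j2 : Fintype n)
    (M : Matrix n n ℝ) : @Matrix.det n i1 j1 ℝ _ M = @Matrix.det n i2 j2 ℝ _ M := by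
  have h1 : i1 = i2 := Subsingleton.elim _ _
  have h2 : j1 = j2 := Subsingleton.elim _ _
  subst h1; subst h2; rfl

lemma pms_eq {d k : ℕ} (hk : k ≤ d) (M : Matrix (Fin d) (Fin d) ℝ) :
    principalMinorSum d k M = ∑ S ∈ Finset.univ.powersetCard k, minor hk M S S := by
  unfold principalMinorSum
  refine Finset.sum_congr rfl fun S hS => ?_
  have h : S.card = k := Finset.mem_powersetCard_univ.mp hS
  rw [det_congr_inst (Classical.decEq _) inferInstance (FinsetCoe.fintype S) inferInstance]
  rw [← Matrix.det_submatrix_equiv_self (S.orderIsoOfFin h).toEquiv, Matrix.submatrix_submatrix]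
  unfold minor
  congr 1
  ext i j
  simp [Function.comp, idx_eq hk h, Finset.coe_orderIsoOfFin_apply, Matrix.submatrix_apply]

lemma integrable_minor_mul {d k : ℕ}
    {m : MeasurableSpace (Matrix.orthogonalGroup (Fin d) ℝ)}
    [BorelSpace (Matrix.orthogonalGroup (Fin d) ℝ)]
    (μ : Measure (Matrix.orthogonalGroup (Fin d) ℝ)) [IsProbabilityMeasure μ]
    (hk : k ≤ d) (T U S V : Finset (Fin d)) :
    Integrable (fun Q : Matrix.orthogonalGroup (Fin d) ℝ =>
      minor hk (Q : Matrix (Fin d) (Fin d) ℝ) T U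
        * minor hk (Q : Matrix (Fin d) (Fin d) ℝ) S V) μ := by
  refine integrable_cont_bdd μ _ ((continuous_minorQ hk T U).mul (continuous_minorQ hk S V))
    ((Nat.factorial k : ℝ) * (Nat.factorial k : ℝ)) (fun Q => ?_)
  rw [abs_mul]
  exact mul_le_mul (abs_minor_le hk Q T U) (abs_minor_le hk Q S V) (abs_nonneg _)
    (by positivity)

end ExpEsymmAux
end


open ExpEsymmAux

/-- For `d × d` real symmetric matrices `A`, `B` and a Haar-random orthogonal
matrix `Q` (Haar probability measure, characterized by left-invariance on the compact
group `O(d)`), `𝔼_Q e_k(A Q B Qᵀ) = e_k(A) e_k(B) / (d choose k)` for `k ≤ d`. -/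
theorem expected_esymm_mul_conjugation
    (d k : ℕ) (hk : k ≤ d)
    (A B : Matrix (Fin d) (Fin d) ℝ) (hA : Aᵀ = A) (hB : Bᵀ = B)
    {m : MeasurableSpace (orthogonalGroup (Fin d) ℝ)} [BorelSpace (orthogonalGroup (Fin d) ℝ)]
    (μ : Measure (orthogonalGroup (Fin d) ℝ)) [IsProbabilityMeasure μ]
    (hinv : ∀ P : orthogonalGroup (Fin d) ℝ,
      MeasurePreserving (fun Q : orthogonalGroup (Fin d) ℝ => P * Q) μ μ) :
    ∫ Q : orthogonalGroup (Fin d) ℝ,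
        principalMinorSum d k (A * (Q : Matrix (Fin d) (Fin d) ℝ) * B * (Q : Matrix (Fin d) (Fin d) ℝ)ᵀ) ∂μ
      = principalMinorSum d k A * principalMinorSum d k B / (d.choose k) := by
  classical
  set 𝒮 : Finset (Finset (Fin d)) := Finset.univ.powersetCard k with h𝒮
  have hcard : ∀ S ∈ 𝒮, S.card = k := fun S hS => Finset.mem_powersetCard_univ.mp hS
  -- orthogonality of Q
  have hQorth : ∀ Q : orthogonalGroup (Fin d) ℝ,
      (Q : Matrix (Fin d) (Fin d) ℝ)ᵀ * (Q : Matrix (Fin d) (Fin d) ℝ) = 1 := by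
    intro Q
    have h := (Matrix.mem_orthogonalGroup_iff' (Fin d) ℝ).mp Q.prop
    exact h
  -- the J integrals
  set J : Finset (Fin d) → Finset (Fin d) → Finset (Fin d) → Finset (Fin d) → ℝ :=
    fun T U S V => ∫ Q : orthogonalGroup (Fin d) ℝ,
      minor hk (Q : Matrix (Fin d) (Fin d) ℝ) T U
        * minor hk (Q : Matrix (Fin d) (Fin d) ℝ) S V ∂μ with hJ
  -- J vanishes unless T = S
  have J0 : ∀ T U S V : Finset (Fin d), T.card = k → S.card = k → T ≠ S →
      J T U S V = 0 := by
    intro T U S V hT hS hTS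
    have hns : ¬ T ⊆ S := fun hsub => hTS (Finset.eq_of_subset_of_card_le hsub (by rw [hT, hS]))
    obtain ⟨i, hiT, hiS⟩ := Finset.not_subset.mp hns
    set D : orthogonalGroup (Fin d) ℝ := ⟨sgnMat i, sgnMat_mem i⟩ with hD
    have key : ∀ Q : orthogonalGroup (Fin d) ℝ,
        minor hk ((D * Q : orthogonalGroup (Fin d) ℝ) : Matrix (Fin d) (Fin d) ℝ) T U
          * minor hk ((D * Q : orthogonalGroup (Fin d) ℝ) : Matrix (Fin d) (Fin d) ℝ) S V
        = - (minor hk (Q : Matrix (Fin d) (Fin d) ℝ) T U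
          * minor hk (Q : Matrix (Fin d) (Fin d) ℝ) S V) := by
      intro Q
      have hco : ((D * Q : orthogonalGroup (Fin d) ℝ) : Matrix (Fin d) (Fin d) ℝ)
          = sgnMat i * (Q : Matrix (Fin d) (Fin d) ℝ) := rfl
      rw [hco, sgnMat_mul, minor_rowScale, minor_rowScale]
      have e1 : (∏ r : Fin k, (if idx hk T r = i then (-1 : ℝ) else 1)) = -1 := by
        rw [prod_idx_ite hk hT i (-1), if_pos hiT]
      have e2 : (∏ r : Fin k, (if idx hk S r = i then (-1 : ℝ) else 1)) = 1 := by
        rw [prod_idx_ite hk hS i (-1), if_neg hiS]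
      rw [e1, e2]
      ring
    have h1 := integral_mulLeft μ hinv D
      (fun Q => minor hk (Q : Matrix (Fin d) (Fin d) ℝ) T U
        * minor hk (Q : Matrix (Fin d) (Fin d) ℝ) S V)
    simp only [hJ]
    have h2 : (∫ Q : orthogonalGroup (Fin d) ℝ,
        minor hk ((D * Q : orthogonalGroup (Fin d) ℝ) : Matrix (Fin d) (Fin d) ℝ) T U
          * minor hk ((D * Q : orthogonalGroup (Fin d) ℝ) : Matrix (Fin d) (Fin d) ℝ) S V ∂μ)
        = - ∫ Q : orthogonalGroup (Fin d) ℝ,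
            minor hk (Q : Matrix (Fin d) (Fin d) ℝ) T U
              * minor hk (Q : Matrix (Fin d) (Fin d) ℝ) S V ∂μ := by
      rw [← integral_neg]
      exact integral_congr_ae (Filter.Eventually.of_forall key)
    have h3 := h2.symm.trans h1
    linarith
  -- J is constant in the diagonal row argument
  have Jconst : ∀ T T' U V : Finset (Fin d), T.card = k → T'.card = k →
      J T U T V = J T' U T' V := by
    intro T T' U V hT hT'
    obtain ⟨σ, hσ⟩ := exists_perm_image (show T'.card = T.card by rw [hT, hT'])
    obtain ⟨τ, hτ⟩ := exists_rowPerm hk σ hT hT' hσ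
    set P : orthogonalGroup (Fin d) ℝ := ⟨permMat σ, permMat_mem σ⟩ with hP
    have hsgn : ((Equiv.Perm.sign τ : ℤ) : ℝ) * ((Equiv.Perm.sign τ : ℤ) : ℝ) = 1 := by
      rcases Int.units_eq_one_or (Equiv.Perm.sign τ) with hs | hs <;> rw [hs] <;> norm_num
    have key : ∀ Q : orthogonalGroup (Fin d) ℝ,
        minor hk ((P * Q : orthogonalGroup (Fin d) ℝ) : Matrix (Fin d) (Fin d) ℝ) T' U
          * minor hk ((P * Q : orthogonalGroup (Fin d) ℝ) : Matrix (Fin d) (Fin d) ℝ) T' V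
        = minor hk (Q : Matrix (Fin d) (Fin d) ℝ) T U
          * minor hk (Q : Matrix (Fin d) (Fin d) ℝ) T V := by
      intro Q
      have hco : ((P * Q : orthogonalGroup (Fin d) ℝ) : Matrix (Fin d) (Fin d) ℝ)
          = permMat σ * (Q : Matrix (Fin d) (Fin d) ℝ) := rfl
      rw [hco, permMat_mul, minor_of_comp hk _ σ τ hτ U, minor_of_comp hk _ σ τ hτ V]
      calc ((Equiv.Perm.sign τ : ℤ) : ℝ) * minor hk (Q : Matrix (Fin d) (Fin d) ℝ) T U
            * (((Equiv.Perm.sign τ : ℤ) : ℝ) * minor hk (Q : Matrix (Fin d) (Fin d) ℝ) T V)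
          = (((Equiv.Perm.sign τ : ℤ) : ℝ) * ((Equiv.Perm.sign τ : ℤ) : ℝ))
            * (minor hk (Q : Matrix (Fin d) (Fin d) ℝ) T U
              * minor hk (Q : Matrix (Fin d) (Fin d) ℝ) T V) := by ring
        _ = _ := by rw [hsgn, one_mul]
    have h1 := integral_mulLeft μ hinv P
      (fun Q => minor hk (Q : Matrix (Fin d) (Fin d) ℝ) T' U
        * minor hk (Q : Matrix (Fin d) (Fin d) ℝ) T' V)
    simp only [hJ]
    rw [← h1]
    exact integral_congr_ae (Filter.Eventually.of_forall (fun Q => (key Q).symm))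
  -- the sum of the diagonal J's
  have Jsum : ∀ U V : Finset (Fin d), U.card = k → V.card = k →
      ∑ T ∈ 𝒮, J T U T V = if U = V then 1 else 0 := by
    intro U V hU hV
    simp only [hJ]
    rw [← integral_finset_sum 𝒮 (fun T _ => integrable_minor_mul μ hk T U T V)]
    have hpt : ∀ Q : orthogonalGroup (Fin d) ℝ,
        (∑ T ∈ 𝒮, minor hk (Q : Matrix (Fin d) (Fin d) ℝ) T U
          * minor hk (Q : Matrix (Fin d) (Fin d) ℝ) T V)
        = if U = V then 1 else 0 := by
      intro Q
      have h1 : ∀ T ∈ 𝒮, minor hk (Q : Matrix (Fin d) (Fin d) ℝ) T U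
          * minor hk (Q : Matrix (Fin d) (Fin d) ℝ) T V
          = minor hk (Q : Matrix (Fin d) (Fin d) ℝ)ᵀ U T
            * minor hk (Q : Matrix (Fin d) (Fin d) ℝ) T V := by
        intro T _
        rw [minor_transpose]
      rw [Finset.sum_congr rfl h1, h𝒮, ← minor_mul hk _ _ U V, hQorth Q, minor_one hk hU hV]
    rw [integral_congr_ae (Filter.Eventually.of_forall hpt)]
    simp
  -- the value of the diagonal J's
  have hchoose : (0 : ℝ) < (d.choose k : ℝ) := by
    exact_mod_cast Nat.choose_pos hk
  have h𝒮card : 𝒮.card = d.choose k := by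
    rw [h𝒮, Finset.card_powersetCard, Finset.card_univ, Fintype.card_fin]
  have Jval : ∀ T U V : Finset (Fin d), T.card = k → U.card = k → V.card = k →
      J T U T V = (if U = V then 1 else 0) / (d.choose k : ℝ) := by
    intro T U V hT hU hV
    have hTmem : T ∈ 𝒮 := Finset.mem_powersetCard_univ.mpr hT
    have h1 : ∑ T' ∈ 𝒮, J T' U T' V = (d.choose k : ℝ) * J T U T V := by
      rw [Finset.sum_congr rfl (fun T' hT' => Jconst T' T U V (hcard T' hT') hT)]
      rw [Finset.sum_const, h𝒮card, nsmul_eq_mul]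
    have h2 := (Jsum U V hU hV).symm.trans h1
    field_simp [ne_of_gt hchoose]
    linarith [h2]
  -- expand the integrand
  have expand : ∀ Q : orthogonalGroup (Fin d) ℝ,
      principalMinorSum d k (A * (Q : Matrix (Fin d) (Fin d) ℝ) * B
          * (Q : Matrix (Fin d) (Fin d) ℝ)ᵀ)
      = ∑ S ∈ 𝒮, ∑ T ∈ 𝒮, ∑ U ∈ 𝒮, ∑ V ∈ 𝒮,
          (minor hk A S T * minor hk B U V)
            * (minor hk (Q : Matrix (Fin d) (Fin d) ℝ) T U
              * minor hk (Q : Matrix (Fin d) (Fin d) ℝ) S V) := by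
    intro Q
    rw [pms_eq hk]
    have hassoc : A * (Q : Matrix (Fin d) (Fin d) ℝ) * B * (Q : Matrix (Fin d) (Fin d) ℝ)ᵀ
        = A * ((Q : Matrix (Fin d) (Fin d) ℝ)
          * (B * (Q : Matrix (Fin d) (Fin d) ℝ)ᵀ)) := by
      rw [Matrix.mul_assoc, Matrix.mul_assoc]
    rw [hassoc]
    simp only [minor_mul hk, minor_transpose hk, Finset.mul_sum, h𝒮]
    refine Finset.sum_congr rfl fun S _ => Finset.sum_congr rfl fun T _ =>
      Finset.sum_congr rfl fun U _ => Finset.sum_congr rfl fun V _ => by ring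
  -- put everything together
  rw [integral_congr_ae (Filter.Eventually.of_forall expand)]
  have hflat : ∀ Q : orthogonalGroup (Fin d) ℝ,
      (∑ S ∈ 𝒮, ∑ T ∈ 𝒮, ∑ U ∈ 𝒮, ∑ V ∈ 𝒮,
          (minor hk A S T * minor hk B U V)
            * (minor hk (Q : Matrix (Fin d) (Fin d) ℝ) T U
              * minor hk (Q : Matrix (Fin d) (Fin d) ℝ) S V))
      = ∑ x ∈ 𝒮 ×ˢ (𝒮 ×ˢ (𝒮 ×ˢ 𝒮)),
          (minor hk A x.1 x.2.1 * minor hk B x.2.2.1 x.2.2.2)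
            * (minor hk (Q : Matrix (Fin d) (Fin d) ℝ) x.2.1 x.2.2.1
              * minor hk (Q : Matrix (Fin d) (Fin d) ℝ) x.1 x.2.2.2) := by
    intro Q
    rw [Finset.sum_product, ]
    exact Finset.sum_congr rfl fun S _ => by
      rw [Finset.sum_product]
      exact Finset.sum_congr rfl fun T _ => by rw [Finset.sum_product]
  rw [integral_congr_ae (Filter.Eventually.of_forall hflat)]
  rw [integral_finset_sum _ (fun x _ =>
    (integrable_minor_mul μ hk x.2.1 x.2.2.1 x.1 x.2.2.2).const_mul _)]
  have hJint : ∀ x : Finset (Fin d) × Finset (Fin d) × Finset (Fin d) × Finset (Fin d),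
      (∫ Q : orthogonalGroup (Fin d) ℝ,
        (minor hk A x.1 x.2.1 * minor hk B x.2.2.1 x.2.2.2)
          * (minor hk (Q : Matrix (Fin d) (Fin d) ℝ) x.2.1 x.2.2.1
            * minor hk (Q : Matrix (Fin d) (Fin d) ℝ) x.1 x.2.2.2) ∂μ)
      = (minor hk A x.1 x.2.1 * minor hk B x.2.2.1 x.2.2.2) * J x.2.1 x.2.2.1 x.1 x.2.2.2 := by
    intro x
    simp only [hJ]
    rw [MeasureTheory.integral_const_mul]
  rw [Finset.sum_congr rfl (fun x _ => hJint x)]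
  -- unflatten
  rw [Finset.sum_product]
  have step1 : ∀ S ∈ 𝒮,
      (∑ y ∈ 𝒮 ×ˢ (𝒮 ×ˢ 𝒮), (minor hk A S y.1 * minor hk B y.2.1 y.2.2)
        * J y.1 y.2.1 S y.2.2)
      = ∑ U ∈ 𝒮, minor hk A S S * minor hk B U U / (d.choose k : ℝ) := by
    intro S hS
    rw [Finset.sum_product]
    rw [Finset.sum_eq_single_of_mem S hS]
    · rw [Finset.sum_product]
      refine Finset.sum_congr rfl fun U hU => ?_
      rw [Finset.sum_eq_single_of_mem U hU]
      · rw [Jval S U U (hcard S hS) (hcard U hU) (hcard U hU), if_pos rfl]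
        ring
      · intro V hV hVU
        rw [Jval S U V (hcard S hS) (hcard U hU) (hcard V hV), if_neg (Ne.symm hVU)]
        simp
    · intro T hT hTS
      apply Finset.sum_eq_zero
      intro y hy
      rw [Finset.mem_product] at hy
      rw [J0 T y.1 S y.2 (hcard T hT) (hcard S hS) hTS]
      simp
  rw [Finset.sum_congr rfl step1]
  rw [pms_eq hk A, pms_eq hk B]
  rw [Finset.sum_congr rfl (fun S _ => by rw [← Finset.sum_div, ← Finset.mul_sum]),
    ← Finset.sum_div, ← Finset.sum_mul]
end

section
/- If r is a real polynomial such that the two-variable polynomial h(x,y) = r(xy) is Hurwitz stable (nonvanishing whenever Re x > 0 and Re y > 0), then every complex root of r is real and nonpositive. -/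
open Polynomial

/-- Any complex number that is not a nonpositive real has a square root with
positive real part. -/
lemma exists_sqrt_pos_re (z : ℂ) (hz : ¬ (z.im = 0 ∧ z.re ≤ 0)) :
    ∃ w : ℂ, 0 < w.re ∧ w * w = z := by
  have hz0 : z ≠ 0 := by
    rintro rfl; exact hz ⟨rfl, le_refl 0⟩
  refine ⟨z ^ ((1 : ℂ)/2), ?_, ?_⟩
  · rw [Complex.cpow_def_of_ne_zero hz0, Complex.exp_re]
    apply mul_pos (Real.exp_pos _)
    have him : (Complex.log z * ((1 : ℂ)/2)).im = z.arg / 2 := by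
      simp [Complex.log_im, Complex.mul_im, Complex.div_re, Complex.div_im]
      ring
    rw [him]
    apply Real.cos_pos_of_mem_Ioo
    have h1 : -Real.pi < z.arg := Complex.neg_pi_lt_arg z
    have h2 : z.arg ≤ Real.pi := Complex.arg_le_pi z
    have h3 : z.arg ≠ Real.pi := by
      intro h
      rcases Complex.arg_eq_pi_iff.mp h with ⟨hre, him0⟩
      exact hz ⟨him0, le_of_lt hre⟩
    have h2' : z.arg < Real.pi := lt_of_le_of_ne h2 h3
    constructor <;> linarith [Real.pi_pos]
  · rw [← Complex.cpow_add _ _ hz0]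
    norm_num

/-- If `r ∈ ℝ[x]` is such that `h(x,y) = r(xy)` is Hurwitz stable (nonvanishing whenever
`Re x > 0` and `Re y > 0`), then every complex root of `r` is real and nonpositive. -/
theorem roots_real_nonpos_of_hurwitz_stable (r : Polynomial ℝ)
    (hstable : ∀ x y : ℂ, 0 < x.re → 0 < y.re → aeval (x * y) r ≠ 0) :
    ∀ z : ℂ, aeval z r = 0 → z.im = 0 ∧ z.re ≤ 0 := by
  intro z hzr
  by_contra hz
  obtain ⟨w, hw, hww⟩ := exists_sqrt_pos_re z hz
  exact hstable w w hw hw (hww ▸ hzr)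
end

section
/- Let σ_j^x denote the j-th elementary symmetric polynomial in variables x_1,…,x_d and δ_i^x the i-th elementary symmetric polynomial in the partial derivative operators ∂/∂x_1,…,∂/∂x_d. Then δ_i^x σ_j^x = C(d+i-j, i) σ_{j-i}^x when i ≤ j, and δ_i^x σ_j^x = 0 when i > j. -/
open MvPolynomial Finset

lemma pderiv_prod_X_not_mem {d : ℕ} {T : Finset (Fin d)} {a : Fin d} (h : a ∉ T) :
    pderiv a (∏ t ∈ T, (X t : MvPolynomial (Fin d) ℝ)) = 0 := by
  induction T using Finset.induction with
  | empty => rw [Finset.prod_empty, ← C_1, pderiv_C]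
  | insert _ _ hb ih =>
    rw [Finset.prod_insert hb, Derivation.leibniz]
    simp only [mem_insert, not_or] at h
    rw [ih h.2, pderiv_X_of_ne (Ne.symm h.1)]
    simp

lemma pderiv_prod_X_mem {d : ℕ} {T : Finset (Fin d)} {a : Fin d} (h : a ∈ T) :
    pderiv a (∏ t ∈ T, (X t : MvPolynomial (Fin d) ℝ)) = ∏ t ∈ T.erase a, X t := by
  conv_lhs => rw [← Finset.insert_erase h, Finset.prod_insert (Finset.notMem_erase a T)]
  rw [Derivation.leibniz, pderiv_X_self, pderiv_prod_X_not_mem (Finset.notMem_erase a T)]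
  simp

lemma foldr_pderiv_prod {d : ℕ} (l : List (Fin d)) (hl : l.Nodup) (T : Finset (Fin d)) :
    l.foldr (fun t g => pderiv t g) (∏ t ∈ T, (X t : MvPolynomial (Fin d) ℝ)) =
      if l.toFinset ⊆ T then ∏ t ∈ T \ l.toFinset, X t else 0 := by
  induction l with
  | nil => simp
  | cons a l ih =>
    rw [List.nodup_cons] at hl
    rw [List.foldr_cons, ih hl.2]
    by_cases h1 : l.toFinset ⊆ T
    · rw [if_pos h1]
      by_cases h2 : a ∈ T
      · have ha : a ∈ T \ l.toFinset := by
          simp only [Finset.mem_sdiff, List.mem_toFinset]; exact ⟨h2, hl.1⟩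
        rw [pderiv_prod_X_mem ha, if_pos (by
          simp only [List.toFinset_cons, Finset.insert_subset_iff]; exact ⟨h2, h1⟩)]
        congr 1
        ext x
        simp only [Finset.mem_erase, Finset.mem_sdiff, List.toFinset_cons, Finset.mem_insert,
          not_or]
        tauto
      · rw [pderiv_prod_X_not_mem (by simp [Finset.mem_sdiff, h2]), if_neg (by
          simp only [List.toFinset_cons, Finset.insert_subset_iff]; tauto)]
    · rw [if_neg h1, map_zero, if_neg (by
        simp only [List.toFinset_cons, Finset.insert_subset_iff]; tauto)]

lemma foldr_pderiv_sum {d : ℕ} (l : List (Fin d)) {α : Type*} (s : Finset α)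
    (f : α → MvPolynomial (Fin d) ℝ) :
    l.foldr (fun t g => pderiv t g) (∑ x ∈ s, f x)
      = ∑ x ∈ s, l.foldr (fun t g => pderiv t g) (f x) := by
  induction l with
  | nil => simp
  | cons a l ih => rw [List.foldr_cons, ih, map_sum]; simp

lemma key_expand {d i j : ℕ} :
    (∑ S ∈ Finset.univ.powersetCard i,
      (S.sort (· ≤ ·)).foldr (fun t g => MvPolynomial.pderiv t g) (esymm (Fin d) ℝ j))
    = ∑ S ∈ Finset.univ.powersetCard i, ∑ T ∈ Finset.univ.powersetCard j,
        (if S ⊆ T then ∏ t ∈ T \ S, (X t : MvPolynomial (Fin d) ℝ) else 0) := by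
  refine Finset.sum_congr rfl fun S hS => ?_
  rw [esymm, foldr_pderiv_sum]
  refine Finset.sum_congr rfl fun T hT => ?_
  rw [foldr_pderiv_prod _ (Finset.sort_nodup _ _), Finset.sort_toFinset]

lemma inner_bij {d i j : ℕ} (S : Finset (Fin d)) (hS : S.card = i) (hij : i ≤ j) :
    (∑ T ∈ Finset.univ.powersetCard j,
        (if S ⊆ T then ∏ t ∈ T \ S, (X t : MvPolynomial (Fin d) ℝ) else 0))
    = ∑ U ∈ Finset.univ.powersetCard (j - i),
        (if Disjoint S U then ∏ t ∈ U, (X t : MvPolynomial (Fin d) ℝ) else 0) := by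
  rw [← Finset.sum_filter, ← Finset.sum_filter]
  refine Finset.sum_nbij' (fun T => T \ S) (fun U => U ∪ S) ?_ ?_ ?_ ?_ ?_
  · intro T hT
    simp only [Finset.mem_filter, Finset.mem_powersetCard] at hT ⊢
    refine ⟨⟨Finset.subset_univ _, ?_⟩, disjoint_sdiff⟩
    rw [Finset.card_sdiff_of_subset hT.2, hT.1.2, hS]
  · intro U hU
    simp only [Finset.mem_filter, Finset.mem_powersetCard] at hU ⊢
    refine ⟨⟨Finset.subset_univ _, ?_⟩, Finset.subset_union_right⟩
    rw [Finset.card_union_of_disjoint hU.2.symm, hU.1.2, hS]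
    omega
  · intro T hT
    simp only [Finset.mem_filter] at hT
    exact Finset.sdiff_union_of_subset hT.2
  · intro U hU
    simp only [Finset.mem_filter] at hU
    exact Finset.union_sdiff_cancel_right hU.2.symm
  · intro T hT
    rfl

/-- `δ_i` applied to a polynomial: the `i`-th elementary symmetric polynomial of the
partial derivative operators `∂/∂x_1, …, ∂/∂x_d` (which commute, so the order of
composition is irrelevant), applied to `f`. -/
noncomputable def elemSymmDeriv (d i : ℕ) (f : MvPolynomial (Fin d) ℝ) :
    MvPolynomial (Fin d) ℝ :=
  ∑ S ∈ Finset.univ.powersetCard i,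
    (S.sort (· ≤ ·)).foldr (fun t g => MvPolynomial.pderiv t g) f

/-- `δ_i σ_j = C(d+i-j, i) σ_{j-i}` if `i ≤ j`, and `δ_i σ_j = 0` if `i > j`. -/
theorem elemSymmDeriv_esymm (d i j : ℕ) (hj : j ≤ d) :
    (i ≤ j →
      elemSymmDeriv d i (esymm (Fin d) ℝ j)
        = MvPolynomial.C (((d + i - j).choose i : ℕ) : ℝ) * esymm (Fin d) ℝ (j - i)) ∧
    (j < i → elemSymmDeriv d i (esymm (Fin d) ℝ j) = 0) := by
  rw [elemSymmDeriv, key_expand]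
  constructor
  · intro hij
    have step1 : ∀ S ∈ Finset.univ.powersetCard i,
        (∑ T ∈ Finset.univ.powersetCard j,
          (if S ⊆ T then ∏ t ∈ T \ S, (X t : MvPolynomial (Fin d) ℝ) else 0))
        = ∑ U ∈ Finset.univ.powersetCard (j - i),
            (if Disjoint S U then ∏ t ∈ U, (X t : MvPolynomial (Fin d) ℝ) else 0) := by
      intro S hS
      rw [Finset.mem_powersetCard] at hS
      exact inner_bij S hS.2 hij
    rw [Finset.sum_congr rfl step1, Finset.sum_comm]
    have step2 : ∀ U ∈ Finset.univ.powersetCard (j - i),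
        (∑ S ∈ Finset.univ.powersetCard i,
          (if Disjoint S U then ∏ t ∈ U, (X t : MvPolynomial (Fin d) ℝ) else 0))
        = ((d + i - j).choose i) • ∏ t ∈ U, (X t : MvPolynomial (Fin d) ℝ) := by
      intro U hU
      rw [Finset.mem_powersetCard] at hU
      rw [← Finset.sum_filter, Finset.sum_const]
      congr 1
      have hfil : (Finset.univ.powersetCard i).filter (fun S => Disjoint S U)
          = Uᶜ.powersetCard i := by
        ext S
        simp only [Finset.mem_filter, Finset.mem_powersetCard, Finset.subset_univ, true_and]
        constructor
        · rintro ⟨h1, h2⟩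
          exact ⟨le_compl_iff_disjoint_right.mpr h2, h1⟩
        · rintro ⟨h1, h2⟩
          exact ⟨h2, le_compl_iff_disjoint_right.mp h1⟩
      rw [hfil, Finset.card_powersetCard, Finset.card_compl, Fintype.card_fin, hU.2]
      congr 1
      omega
    rw [Finset.sum_congr rfl step2, ← Finset.smul_sum, esymm, nsmul_eq_mul]
    rw [← map_natCast (C : ℝ →+* MvPolynomial (Fin d) ℝ)]
  · intro hij
    refine Finset.sum_eq_zero fun S hS => Finset.sum_eq_zero fun T hT => ?_
    rw [Finset.mem_powersetCard] at hS hT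
    rw [if_neg]
    intro hsub
    have := Finset.card_le_card hsub
    omega
end

section
/- (Pinching Lemma) Let α > 0, d ≥ 2, and let p(x) = Π_{i=1}^d (x - λ_i) with real roots λ_1 ≥ λ_2 ≥ … ≥ λ_d and λ_1 > λ_k for some k. Then there exist real numbers μ and ρ with λ_1 > μ > λ_k and ρ > λ_1 such that p = p̂ + p̃, where p̃(x) = (x-μ)² Π_{i∉{1,k}} (x-λ_i), p̂(x) = c(x-ρ) Π_{i∉{1,k}} (x-λ_i) for some c > 0, and the largest roots of p - αp', p̃ - αp̃', and p̂ - αp̂' all coincide. -/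
open Polynomial Finset

lemma eval_deriv_prod {ι : Type*} [DecidableEq ι] (s : Finset ι) (f : ι → ℝ) (x : ℝ)
    (h : ∀ i ∈ s, f i < x) :
    eval x (derivative (∏ i ∈ s, (X - C (f i)))) =
      (∏ i ∈ s, (x - f i)) * ∑ i ∈ s, (x - f i)⁻¹ := by
  induction s using Finset.induction_on with
  | empty => simp
  | insert a s ha ih =>
      have hx : x - f a ≠ 0 := sub_ne_zero.2 (h a (mem_insert_self a s)).ne'
      rw [Finset.prod_insert ha, Finset.sum_insert ha, Finset.prod_insert ha,
        derivative_mul, derivative_X_sub_C, one_mul, eval_add, eval_mul, eval_sub,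
        eval_X, eval_C, ih (fun i hi => h i (mem_insert_of_mem hi)), eval_prod]
      simp only [eval_sub, eval_X, eval_C]
      field_simp

lemma exists_greatest_of_finite {Z : Set ℝ} (hfin : Z.Finite) (hne : Z.Nonempty) :
    ∃ t, IsGreatest Z t := by
  obtain ⟨t, ht, hmax⟩ := Set.Finite.exists_maximalFor id Z hfin hne
  refine ⟨t, ht, fun b hb => ?_⟩
  by_contra hbt
  push_neg at hbt
  exact absurd (hmax hb hbt.le) (not_le.2 hbt)

set_option maxHeartbeats 4000000 in
/-- Pinching Lemma: let `α > 0`, `d ≥ 2`, and `p(x) = ∏ (x - λ_i)` with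
`λ_1 ≥ λ_2 ≥ … ≥ λ_d` and `λ_1 > λ_k` for some `k`. Then there are `μ, ρ, c` with
`λ_1 > μ > λ_k`, `ρ > λ_1`, `c > 0`, such that `p = p̂ + p̃` where
`p̃ = (x-μ)² ∏_{i∉{1,k}} (x - λ_i)`, `p̂ = c (x-ρ) ∏_{i∉{1,k}} (x - λ_i)`, and the
largest roots of `p - αp'`, `p̃ - αp̃'`, `p̂ - αp̂'` all coincide. -/
theorem pinching_lemma (α : ℝ) (hα : 0 < α) (d : ℕ) (hd : 2 ≤ d)
    (lam : Fin d → ℝ) (hsorted : ∀ i j : Fin d, i ≤ j → lam j ≤ lam i)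
    (k : Fin d) (hk : lam k < lam ⟨0, by omega⟩)
    (p : Polynomial ℝ) (hp : p = ∏ i, (X - C (lam i))) :
    ∃ μ ρ c : ℝ, ∃ ptil phat : Polynomial ℝ,
      ptil = (X - C μ) ^ 2 *
          ∏ i ∈ Finset.univ.filter (fun i : Fin d => i ≠ ⟨0, by omega⟩ ∧ i ≠ k),
            (X - C (lam i)) ∧
      phat = C c * (X - C ρ) *
          ∏ i ∈ Finset.univ.filter (fun i : Fin d => i ≠ ⟨0, by omega⟩ ∧ i ≠ k),
            (X - C (lam i)) ∧
      p = phat + ptil ∧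
      lam k < μ ∧ μ < lam ⟨0, by omega⟩ ∧ lam ⟨0, by omega⟩ < ρ ∧ 0 < c ∧
      ∃ t : ℝ,
        IsGreatest {x : ℝ | (p - C α * derivative p).eval x = 0} t ∧
        IsGreatest {x : ℝ | (ptil - C α * derivative ptil).eval x = 0} t ∧
        IsGreatest {x : ℝ | (phat - C α * derivative phat).eval x = 0} t := by
  classical
  set z : Fin d := ⟨0, by omega⟩ with hz
  set r1 := lam z with hr1
  set rk := lam k with hrk
  have hkz : k ≠ z := by
    intro h
    have : rk = r1 := by rw [hrk, hr1, h]
    rw [this] at hk; exact lt_irrefl _ hk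
  set s : Finset (Fin d) := Finset.univ.filter (fun i : Fin d => i ≠ z ∧ i ≠ k) with hs
  set q : Polynomial ℝ := ∏ i ∈ s, (X - C (lam i)) with hq
  have hle : ∀ i : Fin d, lam i ≤ r1 := by
    intro i
    exact hsorted z i (by simp [hz, Fin.le_def])
  -- split the product
  have hsplit : p = (X - C r1) * (X - C rk) * q := by
    rw [hp, ← Finset.prod_filter_mul_prod_filter_not Finset.univ
      (fun i : Fin d => i ≠ z ∧ i ≠ k)]
    have hnot : Finset.univ.filter (fun i : Fin d => ¬(i ≠ z ∧ i ≠ k)) = {z, k} := by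
      ext i
      simp only [Finset.mem_filter, Finset.mem_univ, true_and, Finset.mem_insert,
        Finset.mem_singleton]
      tauto
    rw [hnot, Finset.prod_pair (Ne.symm hkz)]
    ring
  -- basic eval facts
  have hbev : ∀ x : ℝ, eval x q = ∏ i ∈ s, (x - lam i) := by
    intro x; simp [hq, eval_prod]
  have hbpos : ∀ x : ℝ, r1 < x → 0 < eval x q := by
    intro x hx
    rw [hbev]
    exact Finset.prod_pos fun i _ => sub_pos.2 ((hle i).trans_lt hx)
  set S : ℝ → ℝ := fun x => ∑ i ∈ s, (x - lam i)⁻¹ with hS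
  have hqd : ∀ x : ℝ, r1 < x → eval x (derivative q) = eval x q * S x := by
    intro x hx
    rw [hq, eval_deriv_prod s lam x (fun i _ => (hle i).trans_lt hx), hbev]
  have hSnn : ∀ x : ℝ, r1 < x → 0 ≤ S x := by
    intro x hx
    exact Finset.sum_nonneg fun i _ => inv_nonneg.2 (sub_pos.2 ((hle i).trans_lt hx)).le
  have hSmono : ∀ x y : ℝ, r1 < x → x ≤ y → S y ≤ S x := by
    intro x y hx hxy
    apply Finset.sum_le_sum
    intro i _
    have h1 : 0 < x - lam i := sub_pos.2 ((hle i).trans_lt hx)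
    gcongr <;> linarith
  have hd2 : (2:ℝ) ≤ (d:ℝ) := by exact_mod_cast hd
  have hScard : ((s.card : ℝ)) ≤ (d:ℝ) := by
    have := (Finset.card_filter_le Finset.univ (fun i : Fin d => i ≠ z ∧ i ≠ k))
    simp only [Finset.card_univ, Fintype.card_fin] at this
    exact_mod_cast this
  have hSbound : ∀ x : ℝ, r1 < x → S x ≤ (d:ℝ) * (x - r1)⁻¹ := by
    intro x hx
    have hpos : (0:ℝ) < x - r1 := sub_pos.2 hx
    calc S x ≤ ∑ _i ∈ s, (x - r1)⁻¹ := by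
          apply Finset.sum_le_sum
          intro i _
          have h1 : 0 < x - lam i := sub_pos.2 ((hle i).trans_lt hx)
          gcongr <;> linarith [hle i]
      _ = (s.card : ℝ) * (x - r1)⁻¹ := by rw [Finset.sum_const, nsmul_eq_mul]
      _ ≤ (d:ℝ) * (x - r1)⁻¹ := by
          apply mul_le_mul_of_nonneg_right hScard (inv_nonneg.2 hpos.le)
  -- the key polynomial identity for p - α p'
  have hP : p - C α * derivative p
      = (X - C r1) * (X - C rk) * (q - C α * derivative q)
        - C α * ((X - C r1) + (X - C rk)) * q := by
    rw [hsplit]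
    simp only [derivative_mul, derivative_X_sub_C, one_mul, mul_one]
    ring
  have hPeval : ∀ x : ℝ, r1 < x → eval x (p - C α * derivative p)
      = eval x q * ((x - r1) * (x - rk) * (1 - α * S x) - α * ((x - r1) + (x - rk))) := by
    intro x hx
    rw [hP]
    simp only [eval_sub, eval_mul, eval_add, eval_X, eval_C, hqd x hx]
    ring
  have hrk1 : rk < r1 := hk
  -- negative point
  set x0 : ℝ := r1 + α/2 with hx0def
  have hx0 : r1 < x0 := by simp [hx0def]; linarith
  have hFx0 : eval x0 (p - C α * derivative p) < 0 := by
    rw [hPeval x0 hx0]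
    apply mul_neg_of_pos_of_neg (hbpos x0 hx0)
    have h1 : 0 ≤ S x0 := hSnn x0 hx0
    have h2 : 0 < x0 - rk := by simp only [hx0def]; linarith
    have h3 : x0 - r1 = α/2 := by simp only [hx0def]; ring
    rw [h3]
    nlinarith [mul_nonneg (mul_nonneg hα.le h2.le) (mul_nonneg hα.le h1),
      mul_pos hα h2, mul_pos hα hα]
  -- positive region
  set M : ℝ := r1 + 2*α*(d:ℝ) with hMdef
  have hMr1 : r1 < M := by simp [hMdef]; nlinarith
  have hFpos : ∀ x : ℝ, M ≤ x → 0 < eval x (p - C α * derivative p) := by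
    intro x hx
    have hx1 : r1 < x := lt_of_lt_of_le hMr1 hx
    have hpos : (0:ℝ) < x - r1 := sub_pos.2 hx1
    rw [hPeval x hx1]
    apply mul_pos (hbpos x hx1)
    have hSb := hSbound x hx1
    have hxr : 2*α*(d:ℝ) ≤ x - r1 := by simp [hMdef] at hx; linarith
    have h2 : α * S x ≤ 1/2 := by
      have ha1 : α * S x ≤ α * ((d:ℝ) * (x - r1)⁻¹) :=
        mul_le_mul_of_nonneg_left hSb hα.le
      have ha2 : α * ((d:ℝ) * (x - r1)⁻¹) ≤ 1/2 := by
        rw [show α * ((d:ℝ) * (x - r1)⁻¹) = (α * (d:ℝ))/(x - r1) by ring,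
          div_le_div_iff₀ hpos (by norm_num : (0:ℝ) < 2)]
        nlinarith
      linarith
    have hu4 : 4*α ≤ x - r1 := by nlinarith
    have hv : x - r1 < x - rk := by linarith
    have huv : 0 < (x - r1)*(x - rk) := mul_pos hpos (by linarith)
    nlinarith [mul_le_mul_of_nonneg_left (by linarith : (1:ℝ)/2 ≤ 1 - α * S x) huv.le,
      mul_le_mul_of_nonneg_right hu4 (by linarith : (0:ℝ) ≤ x - rk),
      mul_pos hα (by linarith : (0:ℝ) < (x - rk) - (x - r1))]
  -- intermediate value: a root above r1
  have hcont : Continuous fun x : ℝ => eval x (p - C α * derivative p) :=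
    (p - C α * derivative p).continuous
  have hx0M : x0 ≤ M := by
    simp only [hx0def, hMdef]
    linarith [mul_le_mul_of_nonneg_left hd2 hα.le, hα]
  have h0mem : (0:ℝ) ∈ Set.Ioo (eval x0 (p - C α * derivative p))
      (eval M (p - C α * derivative p)) := ⟨hFx0, hFpos M le_rfl⟩
  obtain ⟨ξ, hξmem, hξ⟩ := intermediate_value_Ioo hx0M hcont.continuousOn h0mem
  -- the root set is finite and nonempty, take its greatest element
  have hPne : p - C α * derivative p ≠ 0 := by
    intro h
    have := hFpos M le_rfl
    rw [h] at this
    simp at this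
  have hfin : ({x : ℝ | eval x (p - C α * derivative p) = 0}).Finite :=
    Polynomial.finite_setOf_isRoot hPne
  obtain ⟨t, htmem, htub⟩ := exists_greatest_of_finite hfin ⟨ξ, hξ⟩
  have htr1 : r1 < t := lt_of_lt_of_le (hx0.trans hξmem.1) (htub hξ)
  have htP : eval t (p - C α * derivative p) = 0 := htmem
  -- positivity beyond t
  have hPposgt : ∀ x : ℝ, t < x → 0 < eval x (p - C α * derivative p) := by
    intro x hxt
    rcases lt_trichotomy (eval x (p - C α * derivative p)) 0 with hneg | h0 | hpos
    · exfalso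
      set y : ℝ := max x M + 1 with hy
      have hyM : M ≤ y := le_trans (le_max_right x M) (by simp [hy])
      have hxy : x ≤ y := le_trans (le_max_left x M) (by simp [hy])
      have h0mem2 : (0:ℝ) ∈ Set.Ioo (eval x (p - C α * derivative p))
          (eval y (p - C α * derivative p)) := ⟨hneg, hFpos y hyM⟩
      obtain ⟨ξ2, hξ2mem, hξ2⟩ := intermediate_value_Ioo hxy hcont.continuousOn h0mem2
      have := htub hξ2
      have := hξ2mem.1
      linarith
    · exact absurd (htub h0) (not_le.2 hxt)
    · exact hpos
  -- numeric data at t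
  set B : ℝ := eval t q with hBdef
  have hB : 0 < B := hbpos t htr1
  set W : ℝ := 1 - α * S t with hWdef
  have hu : 0 < t - r1 := sub_pos.2 htr1
  have hv : 0 < t - rk := by linarith
  have huv : t - r1 < t - rk := by linarith
  have hbr : (t - r1) * (t - rk) * W = α * ((t - r1) + (t - rk)) := by
    have h := hPeval t htr1
    rw [htP] at h
    have h2 : B * ((t - r1) * (t - rk) * W - α * ((t - r1) + (t - rk))) = 0 := by
      rw [hWdef, hBdef]; linarith [h]
    rcases mul_eq_zero.mp h2 with h3 | h3
    · exact absurd h3 hB.ne'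
    · linarith
  have hW : 0 < W := by
    by_contra hWn
    push_neg at hWn
    have h1 : (t - r1) * (t - rk) * W ≤ 0 :=
      mul_nonpos_of_nonneg_of_nonpos (mul_pos hu hv).le hWn
    nlinarith [mul_pos hα (by linarith : (0:ℝ) < (t - r1) + (t - rk))]
  -- define μ
  set μ : ℝ := t - 2*α/W with hμdef
  have hμW : (t - μ) * W = 2*α := by
    rw [hμdef]
    field_simp
    ring
  have hμr1 : μ < r1 := by
    have h1 : (t - r1) * W < 2*α := by
      nlinarith [mul_lt_mul_of_pos_left huv hα, hbr]
    nlinarith [hμW, hW]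
  have hμrk : rk < μ := by
    have h1 : 2*α < (t - rk) * W := by
      nlinarith [mul_lt_mul_of_pos_left huv hα, hbr]
    nlinarith [hμW, hW]
  -- define c
  set c : ℝ := 2*μ - r1 - rk with hcdef
  have h4 : c * W = ((t - r1) + (t - rk)) * W - 4*α := by
    have : c = ((t - r1) + (t - rk)) - 2*(t - μ) := by rw [hcdef]; ring
    rw [this]
    linear_combination (-2 : ℝ) * hμW
  have h3 : ((t - r1) + (t - rk)) * (c * W) = W * ((t - r1) - (t - rk))^2 := by
    linear_combination ((t - r1) + (t - rk)) * h4 + 4 * hbr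
  have hsqpos : 0 < ((t - r1) - (t - rk))^2 := by nlinarith [mul_pos (sub_pos.2 huv) (sub_pos.2 huv)]
  have hcW : 0 < c * W := by
    by_contra hcn
    push_neg at hcn
    nlinarith [mul_pos hW hsqpos, mul_nonpos_of_nonneg_of_nonpos (by linarith : (0:ℝ) ≤ (t - r1) + (t - rk)) hcn]
  have hc : 0 < c := by
    by_contra hcn
    push_neg at hcn
    nlinarith [mul_nonpos_of_nonpos_of_nonneg hcn hW.le]
  -- define ρ
  set ρ : ℝ := (μ^2 - r1*rk)/c with hρdef
  have hcρ : c * ρ = μ^2 - r1*rk := by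
    rw [hρdef]
    field_simp
  have hρsq : c * (ρ - r1) = (μ - r1)^2 := by
    linear_combination hcρ - r1 * hcdef
  have hρr1 : r1 < ρ := by
    by_contra hn
    push_neg at hn
    have h6 : c * (ρ - r1) ≤ 0 := mul_nonpos_of_nonneg_of_nonpos hc.le (by linarith)
    nlinarith [hρsq, mul_pos (sub_pos.2 hμr1) (sub_pos.2 hμr1)]
  -- the polynomials ptil and phat
  set ptil : Polynomial ℝ := (X - C μ)^2 * q with hptil
  set phat : Polynomial ℝ := C c * (X - C ρ) * q with hphat
  have hC2 : (C (2:ℝ) : Polynomial ℝ) = 2 := map_ofNat C 2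
  have e1 : (C c : Polynomial ℝ) = 2 * C μ - C r1 - C rk := by
    rw [hcdef, C_sub, C_sub, C_mul, hC2]
  have e2 : (C c : Polynomial ℝ) * C ρ = C μ^2 - C r1 * C rk := by
    rw [← C_mul, hcρ, C_sub, C_mul, C_pow]
  have keyid : C c * (X - C ρ) + ((X : Polynomial ℝ) - C μ)^2
      = (X - C r1) * (X - C rk) := by
    linear_combination (X : Polynomial ℝ) * e1 - e2
  have hsum : p = phat + ptil := by
    rw [hsplit, hphat, hptil]
    linear_combination (-q) * keyid
  have hdt : ptil - C α * derivative ptil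
      = (X - C μ) * ((X - C μ) * (q - C α * derivative q) - 2 * C α * q) := by
    rw [hptil, sq]
    simp only [derivative_mul, derivative_X_sub_C, one_mul]
    ring
  have hdh : phat - C α * derivative phat
      = C c * ((X - C ρ) * (q - C α * derivative q) - C α * q) := by
    rw [hphat]
    simp only [derivative_mul, derivative_X_sub_C, derivative_C, zero_mul, one_mul,
      mul_one, zero_add, add_zero]
    ring
  have haq : ∀ x : ℝ, r1 < x →
      eval x (q - C α * derivative q) = eval x q * (1 - α * S x) := by
    intro x hx
    rw [eval_sub, eval_mul, eval_C, hqd x hx]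
    ring
  have hevt : ∀ x : ℝ, r1 < x → eval x (ptil - C α * derivative ptil)
      = (x - μ) * ((x - μ) * (eval x q * (1 - α * S x)) - 2*α*eval x q) := by
    intro x hx
    rw [hdt]
    simp only [eval_mul, eval_sub, eval_X, eval_C, eval_ofNat, haq x hx]
  have hevh : ∀ x : ℝ, r1 < x → eval x (phat - C α * derivative phat)
      = c * ((x - ρ) * (eval x q * (1 - α * S x)) - α * eval x q) := by
    intro x hx
    rw [hdh]
    simp only [eval_mul, eval_sub, eval_X, eval_C, haq x hx]
  have htil_t : eval t (ptil - C α * derivative ptil) = 0 := by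
    rw [hevt t htr1, ← hWdef, ← hBdef]
    linear_combination ((t - μ) * B) * hμW
  have hPsum : p - C α * derivative p
      = (phat - C α * derivative phat) + (ptil - C α * derivative ptil) := by
    rw [hsum, derivative_add]
    ring
  have hhat_t : eval t (phat - C α * derivative phat) = 0 := by
    have h := congrArg (eval t) hPsum
    simp only [eval_add] at h
    rw [htP, htil_t] at h
    linarith
  have hρW : (t - ρ) * W = α := by
    have h6 := hhat_t
    rw [hevh t htr1, ← hWdef, ← hBdef] at h6
    have h7 : (t - ρ)*(B*W) - α*B = 0 := by
      rcases mul_eq_zero.mp h6 with h8 | h8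
      · exact absurd h8 hc.ne'
      · exact h8
    have h8 : ((t - ρ)*W)*B = α*B := by linear_combination h7
    exact mul_right_cancel₀ hB.ne' h8
  have hρt : ρ < t := by
    by_contra hn
    push_neg at hn
    nlinarith [hρW, mul_nonpos_of_nonpos_of_nonneg (by linarith : t - ρ ≤ 0) hW.le]
  have htilpos : ∀ x : ℝ, t < x → 0 < eval x (ptil - C α * derivative ptil) := by
    intro x hxt
    have hxr : r1 < x := htr1.trans hxt
    rw [hevt x hxr]
    have hbx : 0 < eval x q := hbpos x hxr
    have hs1 : S x ≤ S t := hSmono t x htr1 hxt.le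
    have hWx : W ≤ 1 - α * S x := by
      rw [hWdef]
      have := mul_le_mul_of_nonneg_left hs1 hα.le
      linarith
    have htμ : 0 < t - μ := by linarith
    have hxμ : 0 < x - μ := by linarith
    have h9 : 2*α < (x - μ)*(1 - α*S x) := by
      have hA : (x - μ)*W ≤ (x - μ)*(1 - α*S x) := mul_le_mul_of_nonneg_left hWx hxμ.le
      have hBt : (t - μ)*W < (x - μ)*W := mul_lt_mul_of_pos_right (by linarith) hW
      linarith [hμW]
    have heq : (x - μ) * ((x - μ) * (eval x q * (1 - α * S x)) - 2*α*eval x q)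
        = (x - μ) * (eval x q * ((x - μ)*(1 - α*S x) - 2*α)) := by ring
    rw [heq]
    exact mul_pos hxμ (mul_pos hbx (by linarith))
  have hhatpos : ∀ x : ℝ, t < x → 0 < eval x (phat - C α * derivative phat) := by
    intro x hxt
    have hxr : r1 < x := htr1.trans hxt
    rw [hevh x hxr]
    have hbx : 0 < eval x q := hbpos x hxr
    have hs1 : S x ≤ S t := hSmono t x htr1 hxt.le
    have hWx : W ≤ 1 - α * S x := by
      rw [hWdef]
      have := mul_le_mul_of_nonneg_left hs1 hα.le
      linarith
    have hxρ : 0 < x - ρ := by linarith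
    have h9 : α < (x - ρ)*(1 - α*S x) := by
      have hA : (x - ρ)*W ≤ (x - ρ)*(1 - α*S x) := mul_le_mul_of_nonneg_left hWx hxρ.le
      have hBt : (t - ρ)*W < (x - ρ)*W := mul_lt_mul_of_pos_right (by linarith) hW
      linarith [hρW]
    have heq : c * ((x - ρ) * (eval x q * (1 - α * S x)) - α * eval x q)
        = c * (eval x q * ((x - ρ)*(1 - α*S x) - α)) := by ring
    rw [heq]
    exact mul_pos hc (mul_pos hbx (by linarith))
  refine ⟨μ, ρ, c, ptil, phat, hptil, hphat, hsum, hμrk, hμr1, hρr1, hc, t,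
    ⟨htP, htub⟩, ⟨htil_t, ?_⟩, ⟨hhat_t, ?_⟩⟩
  · intro x hx
    by_contra hxt
    push_neg at hxt
    exact absurd hx (htilpos x hxt).ne'
  · intro x hx
    by_contra hxt
    push_neg at hxt
    exact absurd hx (hhatpos x hxt).ne'
end

section
/- For α ≥ 0, d ≥ 2, and any real-rooted polynomial p of degree d with positive leading coefficient, maxroot(p' - α p'') ≤ maxroot(p - α p') - α, i.e., the largest root of U_α(Dp) is at most the largest root of U_α p minus α. -/
open Polynomial

/-- The largest real root of a polynomial (as the supremum of its set of real roots). -/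
noncomputable def maxRoot (p : Polynomial ℝ) : ℝ :=
  sSup {x : ℝ | p.eval x = 0}

namespace MaxRootAux

open Filter Topology

/-- Positivity of a product over a multiset. -/
lemma prod_map_pos {s : Multiset ℝ} {f : ℝ → ℝ} (h : ∀ a ∈ s, 0 < f a) :
    0 < (s.map f).prod := by
  induction s using Multiset.induction_on with
  | empty => simp
  | cons a t ih =>
    simp only [Multiset.map_cons, Multiset.prod_cons]
    exact mul_pos (h a (Multiset.mem_cons_self a t))
      (ih fun b hb => h b (Multiset.mem_cons_of_mem hb))

lemma sum_map_nonneg {s : Multiset ℝ} {f : ℝ → ℝ} (h : ∀ a ∈ s, 0 ≤ f a) :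
    0 ≤ (s.map f).sum := by
  induction s using Multiset.induction_on with
  | empty => simp
  | cons a t ih =>
    simp only [Multiset.map_cons, Multiset.sum_cons]
    have := h a (Multiset.mem_cons_self a t)
    have := ih fun b hb => h b (Multiset.mem_cons_of_mem hb)
    linarith

/-- Cauchy–Schwarz (Engel form) over a multiset. -/
lemma ms_cs (f g : ℝ → ℝ) (s : Multiset ℝ) (hg : ∀ a ∈ s, 0 < g a) :
    ((s.map f).sum) ^ 2 ≤ (s.map g).sum * (s.map fun a => (f a) ^ 2 / g a).sum := by
  induction s using Multiset.induction_on with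
  | empty => simp
  | cons a t ih =>
    have hB : 0 < g a := hg a (Multiset.mem_cons_self a t)
    have hgt : ∀ b ∈ t, 0 < g b := fun b hb => hg b (Multiset.mem_cons_of_mem hb)
    have hIH := ih hgt
    have hSy : 0 ≤ (t.map g).sum := sum_map_nonneg fun b hb => (hgt b hb).le
    have hSq : 0 ≤ (t.map fun b => (f b) ^ 2 / g b).sum :=
      sum_map_nonneg fun b hb => div_nonneg (sq_nonneg _) (hgt b hb).le
    simp only [Multiset.map_cons, Multiset.sum_cons]
    set A := f a
    set B := g a
    set Sx := (t.map f).sum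
    set Sy := (t.map g).sum
    set Sq := (t.map fun b => (f b) ^ 2 / g b).sum
    have hQ : A ^ 2 = B * (A ^ 2 / B) := by
      field_simp
    set Q := A ^ 2 / B with hQdef
    have hQ0 : 0 ≤ Q := div_nonneg (sq_nonneg _) hB.le
    -- goal : (A + Sx)^2 ≤ (B + Sy) * (Q + Sq)
    rcases eq_or_lt_of_le hSy with hSy0 | hSy0
    · have hSx : Sx ^ 2 ≤ 0 := by rw [← hSy0] at hIH; linarith
      have hSx0 : Sx = 0 := by nlinarith [sq_nonneg Sx]
      rw [hSx0, ← hSy0]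
      nlinarith [mul_nonneg hB.le hSq]
    · have h1 : 2 * A * B * Sx * Sy ≤ B ^ 2 * Sx ^ 2 + A ^ 2 * Sy ^ 2 := by
        nlinarith [sq_nonneg (B * Sx - A * Sy)]
      have h2 : B ^ 2 * Sx ^ 2 ≤ B ^ 2 * (Sy * Sq) := by nlinarith [hIH, sq_nonneg B]
      have h3 : 2 * A * B * Sx * Sy ≤ (B ^ 2 * Sq + A ^ 2 * Sy) * Sy := by nlinarith
      have h4 : 2 * A * B * Sx ≤ B ^ 2 * Sq + A ^ 2 * Sy :=
        le_of_mul_le_mul_right (by linarith) hSy0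
      have h5 : (2 * A * Sx) * B ≤ (B * Sq + Q * Sy) * B := by nlinarith [h4, hQ]
      have h6 : 2 * A * Sx ≤ B * Sq + Q * Sy := le_of_mul_le_mul_right h5 hB
      nlinarith [hIH, h6, hQ]

/-- The monic polynomial with given multiset of roots. -/
noncomputable def M (s : Multiset ℝ) : Polynomial ℝ := (s.map fun a => X - C a).prod

lemma M_cons (a : ℝ) (t : Multiset ℝ) : M (a ::ₘ t) = (X - C a) * M t := by
  rw [M, Multiset.map_cons, Multiset.prod_cons]; rfl

lemma eval_M (s : Multiset ℝ) (x : ℝ) :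
    (M s).eval x = (s.map fun a => x - a).prod := by
  rw [M, eval_multiset_prod, Multiset.map_map]
  simp

lemma deriv_M (s : Multiset ℝ) (x : ℝ) (h : ∀ a ∈ s, x - a ≠ 0) :
    ((derivative (M s)).eval x
        = (M s).eval x * (s.map fun a => (x - a)⁻¹).sum)
    ∧ ((derivative (derivative (M s))).eval x
        = (M s).eval x *
          (((s.map fun a => (x - a)⁻¹).sum) ^ 2 - (s.map fun a => ((x - a)⁻¹) ^ 2).sum)) := by
  induction s using Multiset.induction_on with
  | empty =>
    constructor <;> simp [M]
  | cons a t ih =>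
    have hxa : x - a ≠ 0 := h a (Multiset.mem_cons_self a t)
    have ht : ∀ b ∈ t, x - b ≠ 0 := fun b hb => h b (Multiset.mem_cons_of_mem hb)
    obtain ⟨ih1, ih2⟩ := ih ht
    have hMc : M (a ::ₘ t) = (X - C a) * M t := M_cons a t
    have hd1 : derivative (M (a ::ₘ t)) = M t + (X - C a) * derivative (M t) := by
      rw [hMc, derivative_mul, derivative_sub, derivative_X, derivative_C, sub_zero, one_mul]
    have hd2 : derivative (derivative (M (a ::ₘ t)))
        = 2 * derivative (M t) + (X - C a) * derivative (derivative (M t)) := by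
      rw [hd1, derivative_add, derivative_mul, derivative_sub, derivative_X, derivative_C,
        sub_zero, one_mul]
      ring
    have hEc : (M (a ::ₘ t)).eval x = (x - a) * (M t).eval x := by
      rw [hMc]; simp
    set Et := (M t).eval x
    set St := (t.map fun b => (x - b)⁻¹).sum
    set Tt := (t.map fun b => ((x - b)⁻¹) ^ 2).sum
    constructor
    · rw [hd1]
      simp only [eval_add, eval_mul, eval_sub, eval_X, eval_C, Multiset.map_cons,
        Multiset.sum_cons, hEc, ih1]
      have hu1 : (x - a) * (x - a)⁻¹ = 1 := mul_inv_cancel₀ hxa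
      linear_combination (-Et) * hu1
    · rw [hd2]
      simp only [eval_add, eval_mul, eval_sub, eval_X, eval_C, eval_ofNat, Multiset.map_cons,
        Multiset.sum_cons, hEc, ih1, ih2]
      have hu1 : (x - a) * (x - a)⁻¹ = 1 := mul_inv_cancel₀ hxa
      linear_combination (-(2 * Et * St)) * hu1

/-- If a polynomial tends to `+∞` and all roots are at most `b`, it is positive beyond `b`. -/
lemma pos_of_roots_le (f : Polynomial ℝ)
    (hf : Filter.Tendsto (fun x => f.eval x) atTop atTop)
    (b : ℝ) (hb : ∀ x, f.eval x = 0 → x ≤ b) :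
    ∀ x, b < x → 0 < f.eval x := by
  intro x hx
  by_contra hle
  push_neg at hle
  obtain ⟨X0, hX1, hX2⟩ := ((hf.eventually_ge_atTop 1).and (eventually_ge_atTop x)).exists
  have hIcc : (0 : ℝ) ∈ Set.Icc (f.eval x) (f.eval X0) := ⟨hle, by linarith⟩
  obtain ⟨z, hz, hz0⟩ := intermediate_value_Icc hX2 (f.continuous.continuousOn) hIcc
  have : z ≤ b := hb z (by simpa using hz0)
  have : x ≤ z := hz.1
  linarith

/-- If `f c = 0` and `f > 0` to the right of `c`, then `f' c ≥ 0`. -/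
lemma deriv_nonneg_boundary (f : Polynomial ℝ) (c : ℝ) (h0 : f.eval c = 0)
    (hpos : ∀ x, c < x → 0 < f.eval x) : 0 ≤ (derivative f).eval c := by
  have hd : HasDerivAt (fun x => f.eval x) ((derivative f).eval c) c := f.hasDerivAt c
  have hslope := hasDerivAt_iff_tendsto_slope.mp hd
  have hmono : nhdsWithin c (Set.Ioi c) ≤ nhdsWithin c ({c}ᶜ) :=
    nhdsWithin_mono c (fun y hy => ne_of_gt hy)
  have hslope' : Filter.Tendsto (slope (fun x => f.eval x) c) (nhdsWithin c (Set.Ioi c))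
      (nhds ((derivative f).eval c)) := hslope.mono_left hmono
  refine ge_of_tendsto hslope' ?_
  filter_upwards [self_mem_nhdsWithin] with y hy
  have hy' : c < y := hy
  have h1 : 0 < f.eval y := hpos y hy'
  rw [slope_def_field]
  exact div_nonneg (by simp only [h0]; linarith) (by linarith)


noncomputable def S1 (s : Multiset ℝ) (x : ℝ) : ℝ := (s.map fun a => (x - a)⁻¹).sum

noncomputable def S2 (s : Multiset ℝ) (x : ℝ) : ℝ := (s.map fun a => ((x - a)⁻¹) ^ 2).sum

lemma deriv_M1 (s : Multiset ℝ) (x : ℝ) (h : ∀ a ∈ s, x - a ≠ 0) :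
    (derivative (M s)).eval x = (M s).eval x * S1 s x := (deriv_M s x h).1

lemma deriv_M2 (s : Multiset ℝ) (x : ℝ) (h : ∀ a ∈ s, x - a ≠ 0) :
    (derivative (derivative (M s))).eval x = (M s).eval x * ((S1 s x) ^ 2 - S2 s x) :=
  (deriv_M s x h).2

end MaxRootAux

open MaxRootAux Filter Topology

set_option maxHeartbeats 2000000 in
/-- For `α ≥ 0`, `d ≥ 2` and a real-rooted `p` of degree `d` with positive leading
coefficient, `maxroot(U_α(Dp)) ≤ maxroot(U_α p) - α`, where `U_α q = q - α q'`. -/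
theorem maxRoot_U_derivative_le (α : ℝ) (hα : 0 ≤ α) (d : ℕ) (hd : 2 ≤ d)
    (p : Polynomial ℝ) (hdeg : p.natDegree = d) (hlead : 0 < p.leadingCoeff)
    (hroots : p.roots.card = d) :
    maxRoot (derivative p - C α * derivative (derivative p))
      ≤ maxRoot (p - C α * derivative p) - α := by
  have hp0 : p ≠ 0 := fun h => by simp [h] at hlead
  set c := p.leadingCoeff with hc
  set s := p.roots with hs
  have hfact' : p = C c * M s := by
    rw [M]
    exact (C_leadingCoeff_mul_prod_multiset_X_sub_C (by rw [hdeg]; exact hroots)).symm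
  have hsne : s ≠ 0 := by
    intro h
    rw [h] at hroots
    simp at hroots
    omega
  -- the largest root of p
  have hfinp : {x : ℝ | p.eval x = 0}.Finite := finite_setOf_isRoot hp0
  have hnep : {x : ℝ | p.eval x = 0}.Nonempty := by
    obtain ⟨a, ha⟩ := Multiset.exists_mem_of_ne_zero hsne
    exact ⟨a, (mem_roots'.mp ha).2⟩
  set r := sSup {x : ℝ | p.eval x = 0} with hrdef
  have hrroot : p.eval r = 0 := hnep.csSup_mem hfinp
  have hrub : ∀ x : ℝ, p.eval x = 0 → x ≤ r := fun x hx => le_csSup hfinp.bddAbove hx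
  have hrs : r ∈ s := by rw [hs]; exact mem_roots'.mpr ⟨hp0, hrroot⟩
  have hmem_le : ∀ a ∈ s, a ≤ r := fun a ha => hrub a (mem_roots'.mp ha).2
  have hsub : ∀ x : ℝ, r < x → ∀ a ∈ s, x - a ≠ 0 := fun x hx a ha =>
    sub_ne_zero.mpr (ne_of_gt (lt_of_le_of_lt (hmem_le a ha) hx))
  -- positivity and derivative formulas above r
  have hppos : ∀ x : ℝ, r < x → 0 < p.eval x := by
    intro x hx
    rw [hfact', eval_mul, eval_C, eval_M]
    exact mul_pos hlead (prod_map_pos fun a ha => by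
      have := hmem_le a ha; linarith)
  have hD1 : ∀ x : ℝ, r < x → (derivative p).eval x = p.eval x * S1 s x := by
    intro x hx
    conv_lhs => rw [hfact']
    rw [derivative_C_mul, eval_mul, eval_C, deriv_M1 s x (hsub x hx)]
    conv_rhs => rw [hfact']
    rw [eval_mul, eval_C]
    ring
  have hD2 : ∀ x : ℝ, r < x →
      (derivative (derivative p)).eval x = p.eval x * ((S1 s x) ^ 2 - S2 s x) := by
    intro x hx
    conv_lhs => rw [hfact']
    rw [derivative_C_mul, derivative_C_mul, eval_mul, eval_C, deriv_M2 s x (hsub x hx)]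
    conv_rhs => rw [hfact']
    rw [eval_mul, eval_C]
    ring
  have hS1_ge : ∀ x : ℝ, r < x → (x - r)⁻¹ ≤ S1 s x := by
    intro x hx
    refine Multiset.single_le_sum ?_ _ (Multiset.mem_map_of_mem _ hrs)
    intro b hb
    obtain ⟨a, ha, rfl⟩ := Multiset.mem_map.mp hb
    have := hmem_le a ha
    exact inv_nonneg.mpr (by linarith)
  have hS1pos : ∀ x : ℝ, r < x → 0 < S1 s x := fun x hx =>
    lt_of_lt_of_le (inv_pos.mpr (by linarith)) (hS1_ge x hx)
  -- the polynomial q = p - α p'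
  set q := p - C α * derivative p with hqdef
  have hdpnd : (derivative p).natDegree ≤ d - 1 := by
    have h := natDegree_derivative_le p
    rw [hdeg] at h
    exact h
  have hpcoeffd : p.coeff d = c := by rw [← hdeg, hc]; exact coeff_natDegree
  have hdpcoeffd : (derivative p).coeff d = 0 :=
    coeff_eq_zero_of_natDegree_lt (lt_of_le_of_lt hdpnd (by omega))
  have hqcoeff : q.coeff d = c := by
    rw [hqdef, coeff_sub, coeff_C_mul, hdpcoeffd, mul_zero, sub_zero, hpcoeffd]
  have hq0 : q ≠ 0 := fun h => by
    rw [h, coeff_zero] at hqcoeff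
    rw [← hqcoeff] at hlead
    exact lt_irrefl _ hlead
  have hqnd : q.natDegree = d := by
    apply le_antisymm
    · refine (natDegree_sub_le _ _).trans (max_le (le_of_eq hdeg) ?_)
      exact (natDegree_C_mul_le _ _).trans (hdpnd.trans (by omega))
    · exact le_natDegree_of_ne_zero (by rw [hqcoeff]; exact ne_of_gt hlead)
  have hqlead : q.leadingCoeff = c := by rw [leadingCoeff, hqnd, hqcoeff]
  have hqtends : Filter.Tendsto (fun x => q.eval x) atTop atTop := by
    refine tendsto_atTop_of_leadingCoeff_nonneg q ?_ (by rw [hqlead]; exact hlead.le)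
    exact natDegree_pos_iff_degree_pos.mp (by rw [hqnd]; omega)
  have hptends : Filter.Tendsto (fun x => p.eval x) atTop atTop := by
    refine tendsto_atTop_of_leadingCoeff_nonneg p ?_ hlead.le
    exact natDegree_pos_iff_degree_pos.mp (by rw [hdeg]; omega)
  have hp'r : 0 ≤ (derivative p).eval r :=
    deriv_nonneg_boundary p r hrroot (pos_of_roots_le p hptends r hrub)
  have hqr_nonpos : q.eval r ≤ 0 := by
    rw [hqdef, eval_sub, eval_mul, eval_C, hrroot]
    nlinarith [mul_nonneg hα hp'r]
  have hfinq : {x : ℝ | q.eval x = 0}.Finite := finite_setOf_isRoot hq0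
  have hneq : {x : ℝ | q.eval x = 0}.Nonempty := by
    obtain ⟨X0, hX1, hX2⟩ :=
      ((hqtends.eventually_ge_atTop 1).and (Filter.eventually_ge_atTop r)).exists
    obtain ⟨z, hz, hz0⟩ := intermediate_value_Icc hX2 q.continuous.continuousOn
      ⟨hqr_nonpos, by linarith⟩
    exact ⟨z, hz0⟩
  set m := sSup {x : ℝ | q.eval x = 0} with hmdef
  have hm_ub : ∀ x : ℝ, q.eval x = 0 → x ≤ m := fun x hx => le_csSup hfinq.bddAbove hx
  have hqpos : ∀ x : ℝ, m < x → 0 < q.eval x := pos_of_roots_le q hqtends m hm_ub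
  have hqeval : ∀ x : ℝ, r < x → q.eval x = p.eval x * (1 - α * S1 s x) := by
    intro x hx
    rw [hqdef, eval_sub, eval_mul, eval_C, hD1 x hx]
    ring
  -- r + α ≤ m
  have hrm : r + α ≤ m := by
    by_contra hcon
    push_neg at hcon
    rcases eq_or_lt_of_le hα with hα0 | hα0
    · have : q.eval r = 0 := by
        rw [hqdef, eval_sub, eval_mul, eval_C, hrroot, ← hα0]
        ring
      have := hm_ub r this
      linarith
    · have hlt : r < r + α := by linarith
      have h1 : (1 : ℝ) ≤ α * S1 s (r + α) := by
        have h2 := hS1_ge (r + α) hlt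
        have h3 : (r + α - r)⁻¹ = α⁻¹ := by congr 1; ring
        rw [h3] at h2
        calc (1 : ℝ) = α * α⁻¹ := (mul_inv_cancel₀ (ne_of_gt hα0)).symm
        _ ≤ α * S1 s (r + α) := by
            exact mul_le_mul_of_nonneg_left h2 hα
      have h4 : q.eval (r + α) ≤ 0 := by
        rw [hqeval _ hlt]
        have := hppos _ hlt
        nlinarith
      have := hqpos (r + α) (by linarith)
      linarith
  -- the derivative polynomial
  have hq'eq : derivative q = derivative p - C α * derivative (derivative p) := by
    rw [hqdef, derivative_sub, derivative_C_mul]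
  -- facts about derivative p
  have hd1succ : d - 1 + 1 = d := by omega
  have hdpcoeff : (derivative p).coeff (d - 1) = c * d := by
    rw [coeff_derivative, hd1succ, hpcoeffd, Nat.cast_sub (by omega : 1 ≤ d)]
    push_cast
    ring
  have hcd : (0 : ℝ) < c * d := by
    have hd0 : (0 : ℝ) < (d : ℝ) := by exact_mod_cast (by omega : 0 < d)
    exact mul_pos hlead hd0
  have hdp0 : derivative p ≠ 0 := fun h => by
    rw [h, coeff_zero] at hdpcoeff
    nlinarith
  have hdpnd' : (derivative p).natDegree = d - 1 :=
    le_antisymm hdpnd (le_natDegree_of_ne_zero (by rw [hdpcoeff]; exact ne_of_gt hcd))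
  have hdplead : (derivative p).leadingCoeff = c * d := by
    rw [leadingCoeff, hdpnd', hdpcoeff]
  have hdptends : Filter.Tendsto (fun x => (derivative p).eval x) atTop atTop := by
    refine tendsto_atTop_of_leadingCoeff_nonneg _ ?_ (by rw [hdplead]; exact hcd.le)
    exact natDegree_pos_iff_degree_pos.mp (by rw [hdpnd']; omega)
  have hfindp : {x : ℝ | (derivative p).eval x = 0}.Finite := finite_setOf_isRoot hdp0
  have hnedp : {x : ℝ | (derivative p).eval x = 0}.Nonempty := by
    have hcard := p.card_roots_le_derivative
    rw [← hs, hroots] at hcard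
    have : (derivative p).roots ≠ 0 := by
      intro h
      rw [h] at hcard
      simp at hcard
      omega
    obtain ⟨a, ha⟩ := Multiset.exists_mem_of_ne_zero this
    exact ⟨a, (mem_roots'.mp ha).2⟩
  set r' := sSup {x : ℝ | (derivative p).eval x = 0} with hr'def
  have hr'root : (derivative p).eval r' = 0 := hnedp.csSup_mem hfindp
  have hr'ub : ∀ x : ℝ, (derivative p).eval x = 0 → x ≤ r' :=
    fun x hx => le_csSup hfindp.bddAbove hx
  have hdppos : ∀ x : ℝ, r' < x → 0 < (derivative p).eval x :=
    pos_of_roots_le _ hdptends r' hr'ub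
  have hp''r' : 0 ≤ (derivative (derivative p)).eval r' :=
    deriv_nonneg_boundary _ r' hr'root hdppos
  -- facts about q' = derivative q
  have hp2nd : (derivative (derivative p)).natDegree ≤ d - 2 := by
    have h := natDegree_derivative_le (derivative p)
    rw [hdpnd'] at h
    omega
  have hp2coeff : (derivative (derivative p)).coeff (d - 1) = 0 :=
    coeff_eq_zero_of_natDegree_lt (lt_of_le_of_lt hp2nd (by omega))
  have hq'coeff : (derivative q).coeff (d - 1) = c * d := by
    rw [hq'eq, coeff_sub, coeff_C_mul, hp2coeff, mul_zero, sub_zero, hdpcoeff]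
  have hq'0 : derivative q ≠ 0 := fun h => by
    rw [h, coeff_zero] at hq'coeff
    nlinarith
  have hq'nd : (derivative q).natDegree = d - 1 := by
    apply le_antisymm
    · rw [hq'eq]
      refine (natDegree_sub_le _ _).trans (max_le (le_of_eq hdpnd') ?_)
      exact (natDegree_C_mul_le _ _).trans ((natDegree_derivative_le _).trans (by omega))
    · exact le_natDegree_of_ne_zero (by rw [hq'coeff]; exact ne_of_gt hcd)
  have hq'lead : (derivative q).leadingCoeff = c * d := by
    rw [leadingCoeff, hq'nd, hq'coeff]
  have hq'tends : Filter.Tendsto (fun x => (derivative q).eval x) atTop atTop := by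
    refine tendsto_atTop_of_leadingCoeff_nonneg _ ?_ (by rw [hq'lead]; exact hcd.le)
    exact natDegree_pos_iff_degree_pos.mp (by rw [hq'nd]; omega)
  have hq'r' : (derivative q).eval r' ≤ 0 := by
    rw [hq'eq, eval_sub, eval_mul, eval_C, hr'root]
    nlinarith [mul_nonneg hα hp''r']
  have hfinq' : {x : ℝ | (derivative q).eval x = 0}.Finite := finite_setOf_isRoot hq'0
  have hneq' : {x : ℝ | (derivative q).eval x = 0}.Nonempty := by
    obtain ⟨X0, hX1, hX2⟩ :=
      ((hq'tends.eventually_ge_atTop 1).and (Filter.eventually_ge_atTop r')).exists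
    obtain ⟨z, hz, hz0⟩ := intermediate_value_Icc hX2 (derivative q).continuous.continuousOn
      ⟨hq'r', by linarith⟩
    exact ⟨z, hz0⟩
  -- final bound
  have hgoal : ∀ y : ℝ, (derivative q).eval y = 0 → y ≤ m - α := by
    intro y hy
    rcases le_or_gt y r with hyr | hyr
    · linarith
    · -- the Cauchy–Schwarz argument
      have hPy : 0 < p.eval y := hppos y hyr
      have hy' : (derivative p).eval y = α * (derivative (derivative p)).eval y := by
        rw [hq'eq, eval_sub, eval_mul, eval_C] at hy
        linarith
      have hkey : S1 s y = α * ((S1 s y) ^ 2 - S2 s y) := by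
        have h1 := hD1 y hyr
        have h2 := hD2 y hyr
        rw [h1, h2] at hy'
        refine mul_left_cancel₀ (ne_of_gt hPy) ?_
        rw [hy']
        ring
      have hS1y : 0 < S1 s y := hS1pos y hyr
      have hyα : r < y + α := by linarith
      have hsum3 : (s.map fun a => ((y - a)⁻¹) ^ 2 / ((y + α - a)⁻¹)).sum
          = S1 s y + α * S2 s y := by
        have hcg : ∀ a ∈ s, ((y - a)⁻¹) ^ 2 / ((y + α - a)⁻¹)
            = (y - a)⁻¹ + α * ((y - a)⁻¹) ^ 2 := by
          intro a ha
          have h1 : y - a ≠ 0 := hsub y hyr a ha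
          rw [div_eq_mul_inv, inv_inv]
          have hu : (y - a)⁻¹ * (y - a) = 1 := inv_mul_cancel₀ h1
          linear_combination (y - a)⁻¹ * hu
        rw [Multiset.map_congr rfl hcg, Multiset.sum_map_add]
        congr 1
        exact Multiset.sum_map_mul_left
      have hcs := ms_cs (fun a => (y - a)⁻¹) (fun a => (y + α - a)⁻¹) s
        (fun a ha => inv_pos.mpr (by have := hmem_le a ha; linarith))
      rw [hsum3] at hcs
      have hcs' : (S1 s y) ^ 2 ≤ S1 s (y + α) * (S1 s y + α * S2 s y) := hcs
      have hsum_eq : S1 s y + α * S2 s y = α * (S1 s y) ^ 2 := by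
        linear_combination hkey
      rw [hsum_eq] at hcs'
      have h1α : (1 : ℝ) ≤ α * S1 s (y + α) := by
        have hS1sq : 0 < (S1 s y) ^ 2 := by positivity
        nlinarith [hcs', hS1sq]
      have hqyα : q.eval (y + α) ≤ 0 := by
        rw [hqeval _ hyα]
        have h5 : 1 - α * S1 s (y + α) ≤ 0 := by linarith
        have h6 := mul_le_mul_of_nonneg_left h5 (hppos _ hyα).le
        simpa using h6
      by_contra hcon
      push_neg at hcon
      have := hqpos (y + α) (by linarith)
      linarith
  -- conclude
  show sSup {x : ℝ | (derivative p - C α * derivative (derivative p)).eval x = 0} ≤ m - α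
  rw [← hq'eq]
  exact csSup_le hneq' hgoal
end

section
/- If p ∈ ℝ[x] has degree d and q has degree k < d, both with positive leading coefficients, then p ⊞_d q = (1/d) (Dp) ⊞_{d-1} q, where ⊞_d denotes the symmetric additive convolution defined by the coefficient formula. -/
open Polynomial Finset

/-- The symmetric additive convolution
`p ⊞_d q = ∑_{k'=0}^d x^{d-k'}(-1)^{k'} ∑_{i+j=k'} [(d-i)!(d-j)!/(d!(d-i-j)!)] a_i b_j`,
where `a_i = (-1)^i coeff_{d-i}(p)` and `b_j = (-1)^j coeff_{d-j}(q)`. -/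
noncomputable def symmAddConv (d : ℕ) (p q : Polynomial ℝ) : Polynomial ℝ :=
  ∑ k ∈ range (d + 1), C ((-1 : ℝ) ^ k *
      ∑ i ∈ range (k + 1),
        (((d - i).factorial * (d - (k - i)).factorial : ℝ) /
            (d.factorial * (d - k).factorial)) *
          ((-1 : ℝ) ^ i * p.coeff (d - i)) *
          ((-1 : ℝ) ^ (k - i) * q.coeff (d - (k - i)))) * X ^ (d - k)

/-- If `deg p = d` and `deg q = k < d`, both with positive leading coefficients, then
`p ⊞_d q = (1/d) (Dp) ⊞_{d-1} q`. -/
theorem symmAddConv_reduce_degree (d k : ℕ) (hk : k < d)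
    (p q : Polynomial ℝ) (hp : p.natDegree = d) (hq : q.natDegree = k)
    (hpl : 0 < p.leadingCoeff) (hql : 0 < q.leadingCoeff) :
    symmAddConv d p q = C ((d : ℝ)⁻¹) * symmAddConv (d - 1) (derivative p) q := by
  have hd0 : 0 < d := lt_of_le_of_lt (Nat.zero_le k) hk
  have hqd : q.coeff d = 0 :=
    coeff_eq_zero_of_natDegree_lt (by rw [hq]; exact hk)
  unfold symmAddConv
  rw [Finset.sum_range_succ' _ d]
  conv_rhs => rw [Finset.mul_sum]
  simp only [zero_add, Finset.sum_range_one, Nat.sub_self, Nat.sub_zero, pow_zero,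
    one_mul, hqd, mul_zero, zero_mul, map_zero, add_zero]
  rw [show d - 1 + 1 = d from by omega]
  refine Finset.sum_congr rfl fun m hm => ?_
  rw [Finset.mem_range] at hm
  rw [Finset.sum_range_succ]
  simp only [Nat.sub_self, Nat.sub_zero, hqd, mul_zero, add_zero]
  rw [← mul_assoc, ← C_mul, show d - (m + 1) = d - 1 - m from by omega]
  congr 1
  congr 1
  rw [Finset.mul_sum, Finset.mul_sum, Finset.mul_sum]
  refine Finset.sum_congr rfl fun i hi => ?_
  rw [Finset.mem_range] at hi
  have hi' : i ≤ m := Nat.lt_succ_iff.mp hi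
  rw [coeff_derivative]
  rw [show d - 1 - i + 1 = d - i from by omega,
    show d - 1 - (m - i) = d - (m + 1 - i) from by omega,
    show m + 1 - i = (m - i) + 1 from by omega]
  have hf1 : (((d - i).factorial : ℝ)) = (d - i : ℕ) * ((d - 1 - i).factorial : ℝ) := by
    rw [show d - i = d - 1 - i + 1 from by omega, Nat.factorial_succ]
    push_cast; ring
  have hf2 : ((d.factorial : ℝ)) = (d : ℕ) * ((d - 1).factorial : ℝ) := by
    rw [show d = d - 1 + 1 from by omega, Nat.factorial_succ]
    push_cast
    ring
  have hcast : ((d - 1 - i : ℕ) : ℝ) + 1 = ((d - i : ℕ) : ℝ) := by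
    exact_mod_cast show d - 1 - i + 1 = d - i from by omega
  rw [hf1, hf2, hcast]
  have hd : (d : ℝ) ≠ 0 := Nat.cast_ne_zero.mpr hd0.ne'
  have hD : (((d - 1).factorial : ℕ) : ℝ) ≠ 0 := Nat.cast_ne_zero.mpr (Nat.factorial_ne_zero _)
  have hE : (((d - 1 - m).factorial : ℕ) : ℝ) ≠ 0 := Nat.cast_ne_zero.mpr (Nat.factorial_ne_zero _)
  field_simp
  ring
end

section
/- Let q_d^{λ,μ}(x) denote the asymmetric additive convolution of (x-λ)^d and (x-μ)^d. Then q_d^{λ,μ}(x) = (λμ)^{d/2} · U_d((x - (λ+μ)) / (2√(λμ))), where U_d is the degree d Chebyshev polynomial of the second kind. Equivalently, q_d^{λ,μ} satisfies the recurrence q_0 = 1, q_1 = x - (λ+μ), q_d = (x - (λ+μ)) q_{d-1} - λμ q_{d-2}. -/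
open Polynomial Finset

/-- The asymmetric additive convolution
`p ⊞⊞_d q = ∑_{k=0}^d x^{d-k}(-1)^k ∑_{i+j=k} [(d-i)!(d-j)!/(d!(d-i-j)!)]² a_i b_j`,
where `a_i = (-1)^i coeff_{d-i}(p)` and `b_j = (-1)^j coeff_{d-j}(q)`. -/
noncomputable def asymAddConv (d : ℕ) (p q : Polynomial ℝ) : Polynomial ℝ :=
  ∑ k ∈ range (d + 1), C ((-1 : ℝ) ^ k *
      ∑ i ∈ range (k + 1),
        ((((d - i).factorial * (d - (k - i)).factorial : ℝ) /
            (d.factorial * (d - k).factorial)) ^ 2) *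
          ((-1 : ℝ) ^ i * p.coeff (d - i)) *
          ((-1 : ℝ) ^ (k - i) * q.coeff (d - (k - i)))) * X ^ (d - k)

/-- `q_d^{λ,μ} := (x-λ)^d ⊞⊞_d (x-μ)^d`. -/
noncomputable def qlm (lam mu : ℝ) (d : ℕ) : Polynomial ℝ :=
  asymAddConv d ((X - C lam) ^ d) ((X - C mu) ^ d)

noncomputable section AuxQlm

def qcc (d i j : ℕ) : ℝ := ((d - i).choose j : ℝ) * ((d - j).choose i : ℝ)

def qT (lam mu : ℝ) (d k : ℕ) : ℝ :=
  ∑ i ∈ range (k + 1), qcc d i (k - i) * lam ^ i * mu ^ (k - i)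

def qA (lam mu : ℝ) (d k : ℕ) : ℝ := (-1) ^ k * qT lam mu d k

lemma fact_ratio (d i j : ℕ) (h : i + j ≤ d) :
    (((d - i).factorial * (d - j).factorial : ℝ) /
        (d.factorial * (d - (i + j)).factorial)) ^ 2 *
      ((d.choose i : ℝ) * (d.choose j : ℝ)) = qcc d i j := by
  have hi : i ≤ d := le_trans (Nat.le_add_right _ _) h
  have hj : j ≤ d := le_trans (Nat.le_add_left _ _) h
  have hji : j ≤ d - i := Nat.le_sub_of_add_le (by omega)
  have hij : i ≤ d - j := Nat.le_sub_of_add_le (by omega)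
  have e1 : (d.choose i : ℝ) * i.factorial * (d - i).factorial = d.factorial := by
    exact_mod_cast congrArg (Nat.cast (R := ℝ)) (Nat.choose_mul_factorial_mul_factorial hi)
  have e2 : (d.choose j : ℝ) * j.factorial * (d - j).factorial = d.factorial := by
    exact_mod_cast congrArg (Nat.cast (R := ℝ)) (Nat.choose_mul_factorial_mul_factorial hj)
  have e3 : ((d - i).choose j : ℝ) * j.factorial * (d - i - j).factorial = (d - i).factorial := by
    exact_mod_cast congrArg (Nat.cast (R := ℝ)) (Nat.choose_mul_factorial_mul_factorial hji)
  have e4 : ((d - j).choose i : ℝ) * i.factorial * (d - j - i).factorial = (d - j).factorial := by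
    exact_mod_cast congrArg (Nat.cast (R := ℝ)) (Nat.choose_mul_factorial_mul_factorial hij)
  have h5 : d - i - j = d - (i + j) := by omega
  have h6 : d - j - i = d - (i + j) := by omega
  rw [h5] at e3; rw [h6] at e4
  have f0 : (Nat.factorial d : ℝ) ≠ 0 := by exact_mod_cast d.factorial_ne_zero
  have f1 : (Nat.factorial (d - (i+j)) : ℝ) ≠ 0 := by exact_mod_cast (d - (i+j)).factorial_ne_zero
  have f2 : (Nat.factorial i : ℝ) ≠ 0 := by exact_mod_cast i.factorial_ne_zero
  have f3 : (Nat.factorial j : ℝ) ≠ 0 := by exact_mod_cast j.factorial_ne_zero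
  have f4 : (Nat.factorial (d - i) : ℝ) ≠ 0 := by exact_mod_cast (d - i).factorial_ne_zero
  have f5 : (Nat.factorial (d - j) : ℝ) ≠ 0 := by exact_mod_cast (d - j).factorial_ne_zero
  have g1 : (d.choose i : ℝ) = d.factorial / (i.factorial * (d - i).factorial) := by
    field_simp; linear_combination e1
  have g2 : (d.choose j : ℝ) = d.factorial / (j.factorial * (d - j).factorial) := by
    field_simp; linear_combination e2
  have g3 : ((d - i).choose j : ℝ) = (d - i).factorial / (j.factorial * (d - (i+j)).factorial) := by
    field_simp; linear_combination e3
  have g4 : ((d - j).choose i : ℝ) = (d - j).factorial / (i.factorial * (d - (i+j)).factorial) := by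
    field_simp; linear_combination e4
  rw [qcc, g1, g2, g3, g4]
  field_simp

lemma coeff_sub_pow (a : ℝ) (d i : ℕ) (hi : i ≤ d) :
    ((X - C a) ^ d).coeff (d - i) = (-a) ^ i * (d.choose i : ℝ) := by
  have : (X - C a) = X + C (-a) := by rw [map_neg]; ring
  rw [this, coeff_X_add_C_pow]
  rw [Nat.sub_sub_self hi, Nat.choose_symm hi]

lemma qcc_left (d j : ℕ) : qcc d 0 j = (d.choose j : ℝ) := by simp [qcc]

lemma qcc_right (d i : ℕ) : qcc d i 0 = (d.choose i : ℝ) := by simp [qcc]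

lemma qcc_rec (d i j : ℕ) (h : i + j ≤ d) :
    qcc (d+2) (i+1) (j+1)
      = qcc (d+1) (i+1) (j+1) + qcc (d+1) i (j+1) + qcc (d+1) (i+1) j - qcc d i j := by
  obtain ⟨e, rfl⟩ : ∃ e, d = i + j + e := ⟨d - (i + j), by omega⟩
  unfold qcc
  rw [show i + j + e + 2 - (i+1) = j + e + 1 by omega,
      show i + j + e + 2 - (j+1) = i + e + 1 by omega,
      show i + j + e + 1 - (i+1) = j + e by omega,
      show i + j + e + 1 - (j+1) = i + e by omega,
      show i + j + e + 1 - i = j + e + 1 by omega,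
      show i + j + e + 1 - j = i + e + 1 by omega,
      show i + j + e - i = j + e by omega,
      show i + j + e - j = i + e by omega]
  have p1 : ((j+e+1).choose (j+1) : ℝ) = (j+e).choose j + (j+e).choose (j+1) := by
    exact_mod_cast Nat.choose_succ_succ' (j+e) j
  have p2 : ((i+e+1).choose (i+1) : ℝ) = (i+e).choose i + (i+e).choose (i+1) := by
    exact_mod_cast Nat.choose_succ_succ' (i+e) i
  rw [p1, p2]
  ring

lemma qT_rec (lam mu : ℝ) (d k : ℕ) (h : k ≤ d) :
    qT lam mu (d+2) (k+2)
      = qT lam mu (d+1) (k+2) + (lam + mu) * qT lam mu (d+1) (k+1)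
        - lam * mu * qT lam mu d k := by
  have L : ∀ (d' : ℕ), qT lam mu d' (k+2)
      = (∑ i ∈ range (k+1), qcc d' (i+1) (k+1-i) * lam^(i+1) * mu^(k+1-i))
        + qcc d' (k+2) 0 * lam^(k+2) + qcc d' 0 (k+2) * mu^(k+2) := by
    intro d'
    rw [qT, Finset.sum_range_succ' (fun i => qcc d' i (k+2-i) * lam^i * mu^(k+2-i)) (k+2),
        Finset.sum_range_succ]
    have h1 : ∀ i ∈ range (k+1),
        qcc d' (i+1) (k+2-(i+1)) * lam^(i+1) * mu^(k+2-(i+1))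
          = qcc d' (i+1) (k+1-i) * lam^(i+1) * mu^(k+1-i) := by
      intro i _
      rw [show k+2-(i+1) = k+1-i by omega]
    rw [Finset.sum_congr rfl h1]
    rw [show k+2-(k+1+1) = 0 by omega, show k+2-0 = k+2 by omega]
    ring
  have R2 : lam * qT lam mu (d+1) (k+1)
      = (∑ i ∈ range (k+1), qcc (d+1) i (k+1-i) * lam^(i+1) * mu^(k+1-i))
        + qcc (d+1) (k+1) 0 * lam^(k+2) := by
    rw [qT, Finset.mul_sum, Finset.sum_range_succ,
        show k+1-(k+1) = 0 by omega]
    congr 1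
    · refine Finset.sum_congr rfl fun i _ => by ring
    · ring
  have R3 : mu * qT lam mu (d+1) (k+1)
      = (∑ i ∈ range (k+1), qcc (d+1) (i+1) (k-i) * lam^(i+1) * mu^(k+1-i))
        + qcc (d+1) 0 (k+1) * mu^(k+2) := by
    rw [qT, Finset.mul_sum,
        Finset.sum_range_succ' (fun i => mu * (qcc (d+1) i (k+1-i) * lam^i * mu^(k+1-i))) (k+1)]
    congr 1
    · refine Finset.sum_congr rfl fun i hi => ?_
      rw [mem_range] at hi
      rw [show k+1-(i+1) = k-i by omega, show k+1-i = (k-i)+1 by omega]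
      ring
    · rw [show k+1-0 = k+1 by omega]; ring
  have R4 : lam * mu * qT lam mu d k
      = ∑ i ∈ range (k+1), qcc d i (k-i) * lam^(i+1) * mu^(k+1-i) := by
    rw [qT, Finset.mul_sum]
    refine Finset.sum_congr rfl fun i hi => ?_
    rw [mem_range] at hi
    rw [show k+1-i = (k-i)+1 by omega]
    ring
  have hsum : ∀ i ∈ range (k+1),
      qcc (d+2) (i+1) (k+1-i) * lam^(i+1) * mu^(k+1-i)
        = (qcc (d+1) (i+1) (k+1-i) * lam^(i+1) * mu^(k+1-i)
            + qcc (d+1) i (k+1-i) * lam^(i+1) * mu^(k+1-i)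
            + qcc (d+1) (i+1) (k-i) * lam^(i+1) * mu^(k+1-i)
            - qcc d i (k-i) * lam^(i+1) * mu^(k+1-i)) := by
    intro i hi
    rw [mem_range, Nat.lt_succ_iff] at hi
    have hrec := qcc_rec d i (k-i) (by omega)
    rw [show k+1-i = (k-i)+1 by omega] at *
    rw [hrec]; ring
  have hb1 : qcc (d+2) (k+2) 0 = qcc (d+1) (k+2) 0 + qcc (d+1) (k+1) 0 := by
    rw [qcc_right, qcc_right, qcc_right]
    exact_mod_cast (Nat.choose_succ_succ' (d+1) (k+1)).trans (Nat.add_comm _ _)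
  have hb2 : qcc (d+2) 0 (k+2) = qcc (d+1) 0 (k+2) + qcc (d+1) 0 (k+1) := by
    rw [qcc_left, qcc_left, qcc_left]
    exact_mod_cast (Nat.choose_succ_succ' (d+1) (k+1)).trans (Nat.add_comm _ _)
  rw [L (d+2), L (d+1), add_mul, R2, R3, R4, Finset.sum_congr rfl hsum,
      Finset.sum_sub_distrib, Finset.sum_add_distrib, Finset.sum_add_distrib]
  linear_combination lam^(k+2) * hb1 + mu^(k+2) * hb2

lemma qA_vanish (lam mu : ℝ) (d k : ℕ) (h : d < k) : qA lam mu d k = 0 := by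
  rw [qA, qT]
  rw [Finset.sum_eq_zero, mul_zero]
  intro i hi
  rw [mem_range, Nat.lt_succ_iff] at hi
  rcases le_or_gt i d with hid | hid
  · have : (d - i).choose (k - i) = 0 := Nat.choose_eq_zero_of_lt (by omega)
    rw [qcc, this]; simp
  · have : (d - (k - i)).choose i = 0 := Nat.choose_eq_zero_of_lt (by omega)
    rw [qcc, this]; simp

lemma qA_zero (lam mu : ℝ) (d : ℕ) : qA lam mu d 0 = 1 := by
  simp [qA, qT, qcc]

lemma qA_one (lam mu : ℝ) (d : ℕ) : qA lam mu d 1 = -(d * (lam + mu)) := by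
  rw [qA, qT]
  rw [Finset.sum_range_succ, Finset.sum_range_succ, Finset.sum_range_zero]
  simp [qcc, Nat.choose_one_right]
  ring

lemma qA_rec (lam mu : ℝ) (d k : ℕ) (h : k ≤ d) :
    qA lam mu (d+2) (k+2)
      = qA lam mu (d+1) (k+2) - (lam + mu) * qA lam mu (d+1) (k+1)
        - lam * mu * qA lam mu d k := by
  have := qT_rec lam mu d k h
  simp only [qA, pow_succ]
  linear_combination ((-1:ℝ)^k) * this

lemma sum_reflect_poly (g : ℕ → ℝ) (d : ℕ) :
    ∑ k ∈ range (d+1), C (g k) * X^(d-k)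
      = ∑ k ∈ range (d+1), C (g (d-k)) * (X : Polynomial ℝ)^k := by
  have := Finset.sum_range_reflect (fun k => C (g (d-k)) * (X : Polynomial ℝ)^k) (d+1)
  rw [← this]
  refine Finset.sum_congr rfl fun k hk => ?_
  rw [mem_range, Nat.lt_succ_iff] at hk
  rw [show d + 1 - 1 - k = d - k by omega, show d - (d - k) = k by omega]

lemma coeff_sum_CX (g : ℕ → ℝ) (d n : ℕ) :
    (∑ k ∈ range (d+1), C (g k) * (X : Polynomial ℝ)^k).coeff n
      = if n ≤ d then g n else 0 := by
  rw [finset_sum_coeff]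
  simp only [coeff_C_mul, coeff_X_pow, mul_ite, mul_one, mul_zero]
  rw [Finset.sum_ite_eq (range (d+1)) n g]
  simp [Nat.lt_succ_iff]

lemma qS_rec (lam mu : ℝ) (d : ℕ) :
    ∑ k ∈ range (d+3), C (qA lam mu (d+2) k) * X^(d+2-k)
      = (X - C (lam + mu)) * (∑ k ∈ range (d+2), C (qA lam mu (d+1) k) * X^(d+1-k))
        - C (lam * mu) * ∑ k ∈ range (d+1), C (qA lam mu d k) * X^(d-k) := by
  rw [show d+3 = (d+2)+1 from rfl, sum_reflect_poly (qA lam mu (d+2)) (d+2),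
      sum_reflect_poly (qA lam mu (d+1)) (d+1), sum_reflect_poly (qA lam mu d) d]
  ext n
  rw [sub_mul, coeff_sub, coeff_sub, coeff_C_mul, coeff_C_mul]
  cases n with
  | zero =>
    rw [mul_coeff_zero, coeff_X_zero, zero_mul]
    simp only [coeff_sum_CX, Nat.zero_le, if_true, Nat.sub_zero]
    rw [qA_rec lam mu d d le_rfl, qA_vanish lam mu (d+1) (d+2) (by omega)]
    try ring
  | succ n =>
    rw [coeff_X_mul]
    simp only [coeff_sum_CX]
    rcases lt_or_ge n d with hn | hn
    · rw [if_pos (by omega : n+1 ≤ d+2), if_pos (by omega : n ≤ d+1),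
          if_pos (by omega : n+1 ≤ d+1), if_pos (by omega : n+1 ≤ d)]
      obtain ⟨k, hk⟩ : ∃ k, d = n + 1 + k := ⟨d - (n+1), by omega⟩
      subst hk
      rw [show n+1+k+2 - (n+1) = k+2 by omega, show n+1+k+1 - n = k+2 by omega,
          show n+1+k+1 - (n+1) = k+1 by omega, show n+1+k - (n+1) = k by omega,
          qA_rec lam mu (n+1+k) k (by omega)]
      try ring
    · rcases eq_or_lt_of_le hn with hnd | hnd
      · have hnd' : n = d := hnd.symm
        subst hnd'
        rw [if_pos (by omega : n+1 ≤ n+2), if_pos (by omega : n ≤ n+1),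
            if_pos (le_refl (n+1)), if_neg (by omega : ¬ n+1 ≤ n),
            show n+2-(n+1) = 1 by omega, show n+1-n = 1 by omega,
            show n+1-(n+1) = 0 by omega, qA_one, qA_one, qA_zero]
        push_cast
        ring
      · have h2 : d + 1 ≤ n := hnd
        rcases eq_or_lt_of_le h2 with hnd1 | hnd1
        · have hnd' : n = d + 1 := hnd1.symm
          subst hnd'
          rw [if_pos (by omega : d+1+1 ≤ d+2), if_pos (by omega : d+1 ≤ d+1),
              if_neg (by omega : ¬ d+1+1 ≤ d+1), if_neg (by omega : ¬ d+1+1 ≤ d),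
              show d+2-(d+1+1) = 0 by omega, show d+1-(d+1) = 0 by omega,
              qA_zero, qA_zero]
          ring
        · rw [if_neg (by omega : ¬ n+1 ≤ d+2), if_neg (by omega : ¬ n ≤ d+1),
              if_neg (by omega : ¬ n+1 ≤ d+1), if_neg (by omega : ¬ n+1 ≤ d)]
          ring

lemma qlm_eq_sum (lam mu : ℝ) (d : ℕ) :
    qlm lam mu d = ∑ k ∈ range (d + 1), C (qA lam mu d k) * X ^ (d - k) := by
  unfold qlm asymAddConv
  refine Finset.sum_congr rfl fun k hk => ?_
  rw [mem_range, Nat.lt_succ_iff] at hk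
  congr 2
  rw [qA, qT]
  congr 1
  refine Finset.sum_congr rfl fun i hi => ?_
  rw [mem_range, Nat.lt_succ_iff] at hi
  have hik : i + (k - i) = k := by omega
  have h1 : i ≤ d := le_trans hi hk
  have h2 : k - i ≤ d := le_trans (Nat.sub_le _ _) hk
  rw [coeff_sub_pow lam d i h1, coeff_sub_pow mu d (k - i) h2]
  have key := fact_ratio d i (k - i) (by omega)
  rw [hik] at key
  set r2 : ℝ := (((d - i).factorial * (d - (k - i)).factorial : ℝ) /
      (d.factorial * (d - k).factorial)) ^ 2 with hr2
  have h7 : ((-1 : ℝ)) ^ i * (-lam) ^ i = lam ^ i := by rw [← mul_pow]; ring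
  have h8 : ((-1 : ℝ)) ^ (k - i) * (-mu) ^ (k - i) = mu ^ (k - i) := by rw [← mul_pow]; ring
  linear_combination (lam ^ i * mu ^ (k - i)) * key +
    (r2 * ((d.choose i : ℝ) * (d.choose (k - i) : ℝ)) * ((-1 : ℝ) ^ (k - i) * (-mu) ^ (k - i))) * h7 +
    (r2 * ((d.choose i : ℝ) * (d.choose (k - i) : ℝ)) * lam ^ i) * h8

lemma qlm_zero (lam mu : ℝ) : qlm lam mu 0 = 1 := by
  rw [qlm_eq_sum, Finset.sum_range_one, qA_zero]
  simp

lemma qlm_one (lam mu : ℝ) : qlm lam mu 1 = X - C (lam + mu) := by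
  rw [qlm_eq_sum, Finset.sum_range_succ, Finset.sum_range_one, qA_zero, qA_one]
  norm_num
  ring

lemma qlm_rec (lam mu : ℝ) (e : ℕ) :
    qlm lam mu (e+2)
      = (X - C (lam + mu)) * qlm lam mu (e+1) - C (lam * mu) * qlm lam mu e := by
  rw [qlm_eq_sum, qlm_eq_sum, qlm_eq_sum]
  exact qS_rec lam mu e

end AuxQlm

/-- `q_d^{λ,μ}(x) = (λμ)^{d/2} U_d((x - (λ+μ))/(2√(λμ)))` where `U_d` is the Chebyshev
polynomial of the second kind; equivalently, `q_d^{λ,μ}` satisfies the recurrence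
`q_0 = 1`, `q_1 = x - (λ+μ)`, `q_d = (x-(λ+μ)) q_{d-1} - λμ q_{d-2}`. -/
theorem asymAddConv_pow_eq_chebyshev (lam mu : ℝ) (hlam : 0 < lam) (hmu : 0 < mu) :
    (∀ d : ℕ,
      qlm lam mu d
        = C (Real.sqrt (lam * mu) ^ d) *
            (Polynomial.Chebyshev.U ℝ (d : ℤ)).comp
              (C (1 / (2 * Real.sqrt (lam * mu))) * (X - C (lam + mu)))) ∧
    qlm lam mu 0 = 1 ∧
    qlm lam mu 1 = X - C (lam + mu) ∧
    (∀ d : ℕ, 2 ≤ d →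
      qlm lam mu d
        = (X - C (lam + mu)) * qlm lam mu (d - 1) - C (lam * mu) * qlm lam mu (d - 2)) := by
  have hlm : 0 < lam * mu := mul_pos hlam hmu
  set s : ℝ := Real.sqrt (lam * mu) with hs
  have hs0 : 0 < s := Real.sqrt_pos.mpr hlm
  have hsne : s ≠ 0 := ne_of_gt hs0
  have hs2 : s * s = lam * mu := Real.mul_self_sqrt hlm.le
  set g : Polynomial ℝ := C (1 / (2 * s)) * (X - C (lam + mu)) with hg
  have hcheb : ∀ d : ℕ,
      qlm lam mu d = C (s ^ d) * (Polynomial.Chebyshev.U ℝ (d : ℤ)).comp g := by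
    have key : ∀ d : ℕ,
        (qlm lam mu d = C (s ^ d) * (Polynomial.Chebyshev.U ℝ (d : ℤ)).comp g) ∧
        (qlm lam mu (d+1) = C (s ^ (d+1)) * (Polynomial.Chebyshev.U ℝ ((d+1 : ℕ) : ℤ)).comp g) := by
      intro d
      induction d with
      | zero =>
        constructor
        · rw [qlm_zero]
          simp [Polynomial.Chebyshev.U_zero]
        · rw [qlm_one, show (0:ℕ)+1 = 1 from rfl]
          simp only [Nat.cast_one, Polynomial.Chebyshev.U_one, pow_one]
          rw [mul_comp, X_comp]
          have h2 : ((2 : Polynomial ℝ).comp g) = C 2 := by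
            rw [show (2 : Polynomial ℝ) = C 2 from (map_ofNat C 2).symm, C_comp]
          rw [h2]
          have hC : (C s * (C 2 * g) : Polynomial ℝ) = X - C (lam + mu) := by
            rw [hg, ← mul_assoc, ← mul_assoc, ← C_mul, ← C_mul]
            rw [show s * 2 * (1 / (2 * s)) = 1 by field_simp]
            rw [C_1, one_mul]
          rw [← hC]
      | succ d ih =>
        refine ⟨ih.2, ?_⟩
        have hrec := qlm_rec lam mu d
        rw [show d + 1 + 1 = d + 2 from rfl, hrec, ih.1, ih.2]
        have hcast2 : ((d + 2 : ℕ) : ℤ) = (d : ℤ) + 2 := by push_cast; ring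
        have hcast1 : ((d + 1 : ℕ) : ℤ) = (d : ℤ) + 1 := by push_cast; ring
        rw [hcast2, hcast1, Polynomial.Chebyshev.U_add_two]
        rw [sub_comp, mul_comp, mul_comp, X_comp]
        have h2 : ((2 : Polynomial ℝ).comp g) = C 2 := by
          rw [show (2 : Polynomial ℝ) = C 2 from (map_ofNat C 2).symm, C_comp]
        rw [h2]
        set A : Polynomial ℝ := (Polynomial.Chebyshev.U ℝ ((d : ℤ) + 1)).comp g with hA
        set B : Polynomial ℝ := (Polynomial.Chebyshev.U ℝ (d : ℤ)).comp g with hB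
        have e1 : (C (s ^ (d + 2)) * (C 2 * C (1 / (2 * s))) : Polynomial ℝ)
            = C (s ^ (d + 1)) := by
          rw [← C_mul, ← C_mul]
          congr 1
          rw [pow_succ]
          field_simp
        have e2 : (C (s ^ (d + 2)) : Polynomial ℝ) = C (lam * mu) * C (s ^ d) := by
          rw [← C_mul]
          congr 1
          rw [show d + 2 = d + 1 + 1 from rfl, pow_succ, pow_succ, mul_assoc, hs2]
          ring
        calc (X - C (lam + mu)) * (C (s ^ (d + 1)) * A) - C (lam * mu) * (C (s ^ d) * B)
            = (C (s ^ (d + 2)) * (C 2 * C (1 / (2 * s)))) * (X - C (lam + mu)) * A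
              - (C (lam * mu) * C (s ^ d)) * B := by rw [e1]; ring
          _ = C (s ^ (d + 2)) * (C 2 * g * A - B) := by rw [← e2, hg]; ring
    exact fun d => (key d).1
  refine ⟨hcheb, qlm_zero lam mu, qlm_one lam mu, fun d hd => ?_⟩
  obtain ⟨e, rfl⟩ : ∃ e, d = e + 2 := ⟨d - 2, by omega⟩
  rw [show e + 2 - 1 = e + 1 by omega, show e + 2 - 2 = e by omega]
  exact qlm_rec lam mu e
end

section
/- For real t > 1 and d ≥ 1, the Cauchy transform of the degree d Chebyshev polynomial of the second kind satisfies (1/d)·U_d'(t)/U_d(t) < 1/√(t²-1). -/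
open Polynomial

lemma U_real_cosh (n : ℤ) (θ : ℝ) :
    (Chebyshev.U ℝ n).eval (Real.cosh θ) * Real.sinh θ = Real.sinh (((n : ℝ) + 1) * θ) := by
  have h := Polynomial.Chebyshev.U_complex_cos ((θ : ℂ) * Complex.I) n
  rw [Complex.cos_mul_I, Complex.sin_mul_I] at h
  have h2 : ((n : ℂ) + 1) * ((θ : ℂ) * Complex.I) = ((((n : ℝ) + 1) * θ : ℝ) : ℂ) * Complex.I := by
    push_cast; ring
  rw [h2, Complex.sin_mul_I] at h
  have h3 : (Chebyshev.U ℂ n).eval ((Real.cosh θ : ℝ) : ℂ) * Complex.sinh (θ : ℂ)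
      = Complex.sinh ((((n : ℝ) + 1) * θ : ℝ) : ℂ) := by
    rw [Complex.ofReal_cosh]
    rw [← mul_assoc] at h
    exact mul_right_cancel₀ Complex.I_ne_zero h
  rw [← Polynomial.Chebyshev.complex_ofReal_eval_U, ← Complex.ofReal_sinh,
    ← Complex.ofReal_sinh, ← Complex.ofReal_mul] at h3
  exact_mod_cast h3

lemma sinh_superadd (n : ℕ) (θ : ℝ) (hθ : 0 ≤ θ) :
    (n : ℝ) * Real.sinh θ ≤ Real.sinh (n * θ) := by
  induction n with
  | zero => simp
  | succ k ih =>
    have h1 : Real.sinh (((k : ℝ) + 1) * θ) = Real.sinh ((k : ℝ) * θ) * Real.cosh θ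
        + Real.cosh ((k : ℝ) * θ) * Real.sinh θ := by
      rw [add_mul, one_mul, Real.sinh_add]
    have h2 : 1 ≤ Real.cosh θ := Real.one_le_cosh θ
    have h3 : 1 ≤ Real.cosh ((k : ℝ) * θ) := Real.one_le_cosh _
    have h4 : 0 ≤ Real.sinh ((k : ℝ) * θ) := Real.sinh_nonneg_iff.mpr (by positivity)
    have h5 : 0 ≤ Real.sinh θ := Real.sinh_nonneg_iff.mpr hθ
    push_cast
    nlinarith

set_option maxHeartbeats 800000 in
/-- For real `t > 1` and `d ≥ 1`, the Cauchy transform of the degree-`d` Chebyshev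
polynomial of the second kind satisfies `(1/d) U_d'(t)/U_d(t) < 1/√(t²-1)`. -/
theorem chebyshevU_cauchy_transform_lt (d : ℕ) (hd : 1 ≤ d) (t : ℝ) (ht : 1 < t) :
    (1 / (d : ℝ)) * (derivative (Chebyshev.U ℝ (d : ℤ))).eval t
        / (Chebyshev.U ℝ (d : ℤ)).eval t
      < 1 / Real.sqrt (t ^ 2 - 1) := by
  have hd0 : (0 : ℝ) < d := by exact_mod_cast hd
  set s := Real.sqrt (t ^ 2 - 1) with hs_def
  have ht2 : (0 : ℝ) < t ^ 2 - 1 := by nlinarith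
  have hs2 : s ^ 2 = t ^ 2 - 1 := Real.sq_sqrt ht2.le
  have hs : 0 < s := Real.sqrt_pos.mpr ht2
  set θ := Real.log (t + s) with hθ_def
  have hts : 1 < t + s := by linarith
  have hθ : 0 < θ := Real.log_pos hts
  have hexp : Real.exp θ = t + s := Real.exp_log (by linarith)
  have hmul : (t - s) * (t + s) = 1 := by nlinarith
  have hexpneg : Real.exp (-θ) = t - s := by
    rw [Real.exp_neg, hexp]
    field_simp
    linarith [hmul]
  have hcosh : Real.cosh θ = t := by rw [Real.cosh_eq, hexp, hexpneg]; ring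
  have hsinh : Real.sinh θ = s := by rw [Real.sinh_eq, hexp, hexpneg]; ring
  -- derivative identity: U'(t)·s² + U(t)·t = (d+1)·cosh((d+1)θ)
  have key : (derivative (Chebyshev.U ℝ (d : ℤ))).eval t * s * s
      + (Chebyshev.U ℝ (d : ℤ)).eval t * t
      = Real.cosh (((d : ℝ) + 1) * θ) * ((d : ℝ) + 1) := by
    have h1 : HasDerivAt (fun x => (Chebyshev.U ℝ (d : ℤ)).eval (Real.cosh x) * Real.sinh x)
        ((derivative (Chebyshev.U ℝ (d : ℤ))).eval (Real.cosh θ) * Real.sinh θ * Real.sinh θ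
          + (Chebyshev.U ℝ (d : ℤ)).eval (Real.cosh θ) * Real.cosh θ) θ :=
      (((Chebyshev.U ℝ (d : ℤ)).hasDerivAt (Real.cosh θ)).comp θ
        (Real.hasDerivAt_cosh θ)).mul (Real.hasDerivAt_sinh θ)
    have hlin : HasDerivAt (fun x : ℝ => ((d : ℝ) + 1) * x) ((d : ℝ) + 1) θ := by
      simpa using (hasDerivAt_id θ).const_mul ((d : ℝ) + 1)
    have h2 : HasDerivAt (fun x => Real.sinh (((d : ℝ) + 1) * x))
        (Real.cosh (((d : ℝ) + 1) * θ) * ((d : ℝ) + 1)) θ :=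
      (Real.hasDerivAt_sinh (((d : ℝ) + 1) * θ)).comp θ hlin
    have hfun : (fun x => (Chebyshev.U ℝ (d : ℤ)).eval (Real.cosh x) * Real.sinh x)
        = fun x => Real.sinh (((d : ℝ) + 1) * x) := funext fun x => by
      have h := U_real_cosh (d : ℤ) x
      push_cast at h ⊢
      linarith
    rw [hfun] at h1
    have h3 := h1.unique h2
    rw [hcosh, hsinh] at h3
    linarith
  have hUs : (Chebyshev.U ℝ (d : ℤ)).eval t * s = Real.sinh (((d : ℝ) + 1) * θ) := by
    have h := U_real_cosh (d : ℤ) θ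
    rw [hcosh, hsinh] at h
    push_cast at h ⊢
    exact h
  set φ := ((d : ℝ) + 1) * θ with hφ_def
  have hφ : 0 < φ := by positivity
  have hsinhφ : 0 < Real.sinh φ := Real.sinh_pos_iff.mpr hφ
  have hU : 0 < (Chebyshev.U ℝ (d : ℤ)).eval t := by nlinarith [hUs, hsinhφ, hs]
  -- hyperbolic inequality: (d+1)·cosh φ·s < sinh φ·t + d·sinh φ·s
  have hsub : Real.sinh (φ - θ) = Real.sinh φ * t - Real.cosh φ * s := by
    rw [Real.sinh_sub, hcosh, hsinh]
  have hφθ : φ - θ = (d : ℝ) * θ := by rw [hφ_def]; ring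
  have hsup : (d : ℝ) * s ≤ Real.sinh (φ - θ) := by
    rw [hφθ, ← hsinh]
    exact sinh_superadd d θ hθ.le
  have hexpφ : Real.cosh φ - Real.sinh φ = Real.exp (-φ) := Real.cosh_sub_sinh φ
  have hexpφ1 : Real.exp (-φ) < 1 := Real.exp_lt_one_iff.mpr (by linarith)
  have claim : Real.cosh φ * ((d : ℝ) + 1) * s
      < Real.sinh φ * t + (d : ℝ) * Real.sinh φ * s := by
    nlinarith [hsup, hsub, hs, hd0, hexpφ, hexpφ1, mul_pos hd0 hs, Real.exp_pos (-φ)]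
  have e1 : (derivative (Chebyshev.U ℝ (d : ℤ))).eval t * s * s * s
      = Real.cosh φ * ((d : ℝ) + 1) * s - Real.sinh φ * t := by
    linear_combination s * key - t * hUs
  have e3 : (derivative (Chebyshev.U ℝ (d : ℤ))).eval t * s * s * s
      < (d : ℝ) * Real.sinh φ * s := by
    rw [e1]; linarith
  have e4 : (derivative (Chebyshev.U ℝ (d : ℤ))).eval t * s * (s * s)
      < (d : ℝ) * (Chebyshev.U ℝ (d : ℤ)).eval t * (s * s) := by
    rw [← hUs] at e3
    calc (derivative (Chebyshev.U ℝ (d : ℤ))).eval t * s * (s * s)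
        = (derivative (Chebyshev.U ℝ (d : ℤ))).eval t * s * s * s := by ring
      _ < (d : ℝ) * ((Chebyshev.U ℝ (d : ℤ)).eval t * s) * s := e3
      _ = (d : ℝ) * (Chebyshev.U ℝ (d : ℤ)).eval t * (s * s) := by ring
  -- combine: U'(t)·s < d·U(t)
  have main : (derivative (Chebyshev.U ℝ (d : ℤ))).eval t * s
      < (d : ℝ) * (Chebyshev.U ℝ (d : ℤ)).eval t :=
    lt_of_mul_lt_mul_right e4 (mul_pos hs hs).le
  rw [div_lt_div_iff₀ hU hs, one_mul]
  have heq : 1 / (d : ℝ) * (derivative (Chebyshev.U ℝ (d : ℤ))).eval t * s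
      = (derivative (Chebyshev.U ℝ (d : ℤ))).eval t * s / d := by ring
  rw [heq, div_lt_iff₀ hd0]
  linarith
end

section
/- Fix α > 0 and define F(t) = (1 + e^{-α/t})/(1 - e^{-α/t}) for t > 0, with F(0) understood as the limit 1. Then for all t ∈ (0,1), F(t) < (1-t) + t·F(1); equivalently, coth(α/(2t)) < (1-t) + t·coth(α/2). -/
/-- For fixed `α > 0` and `F(t) = (1 + e^{-α/t})/(1 - e^{-α/t})`, for all `t ∈ (0,1)`:
`F(t) < (1-t) + t F(1)`. -/
theorem coth_interpolation_bound (α : ℝ) (hα : 0 < α) (t : ℝ) (ht : t ∈ Set.Ioo (0 : ℝ) 1) :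
    (1 + Real.exp (-α / t)) / (1 - Real.exp (-α / t))
      < (1 - t) + t * ((1 + Real.exp (-α)) / (1 - Real.exp (-α))) := by
  obtain ⟨ht0, ht1⟩ := ht
  set x := Real.exp (-α / t) with hxdef
  set y := Real.exp (-α) with hydef
  have hx0 : 0 < x := Real.exp_pos _
  have hy0 : 0 < y := Real.exp_pos _
  have hx1 : x < 1 := by
    rw [hxdef]
    have : -α / t < 0 := div_neg_of_neg_of_pos (by linarith) ht0
    simpa using Real.exp_lt_one_iff.mpr this
  have hy1 : y < 1 := by
    rw [hydef]
    simpa using Real.exp_lt_one_iff.mpr (by linarith : -α < 0)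
  -- Bernoulli: 1 + (1/t)(e^α - 1) < (e^α)^(1/t) = e^(α/t)
  have hs : (0:ℝ) < Real.exp α - 1 := by
    have := Real.add_one_lt_exp (ne_of_gt hα)
    linarith
  have hp : 1 < 1 / t := one_lt_one_div ht0 ht1
  have hbern := one_add_mul_self_lt_rpow_one_add (s := Real.exp α - 1)
    (by linarith) (by linarith) hp
  have hrw : (1 + (Real.exp α - 1)) ^ (1/t : ℝ) = Real.exp (α / t) := by
    have : (1 + (Real.exp α - 1)) = Real.exp α := by ring
    rw [this, Real.rpow_def_of_pos (Real.exp_pos α), Real.log_exp]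
    ring_nf
  rw [hrw] at hbern
  -- so 1 + (1/t)*(e^α - 1) < e^(α/t)
  have hxe : x * Real.exp (α / t) = 1 := by
    rw [hxdef, ← Real.exp_add]; ring_nf; exact Real.exp_zero
  have hye : y * Real.exp α = 1 := by
    rw [hydef, ← Real.exp_add]; ring_nf; exact Real.exp_zero
  -- key inequality: x(1-y) < t y (1-x)
  have key : x * (1 - y) < t * (y * (1 - x)) := by
    have h1 : t * (1 + 1 / t * (Real.exp α - 1)) < t * Real.exp (α / t) :=
      (mul_lt_mul_iff_right₀ ht0).mpr hbern
    have h2 : t + (Real.exp α - 1) < t * Real.exp (α / t) := by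
      have : t * (1 + 1 / t * (Real.exp α - 1)) = t + (Real.exp α - 1) := by
        field_simp
      linarith [h1, this.symm.le]
    -- multiply by x*y > 0
    have h3 : x * y * (t + (Real.exp α - 1)) < x * y * (t * Real.exp (α / t)) := by
      apply (mul_lt_mul_iff_right₀ (by positivity)).mpr h2
    have h4 : x * y * (t * Real.exp (α / t)) = t * y := by
      have : x * y * (t * Real.exp (α / t)) = t * y * (x * Real.exp (α / t)) := by ring
      rw [this, hxe]; ring
    have h5 : x * y * Real.exp α = x := by
      have : x * y * Real.exp α = x * (y * Real.exp α) := by ring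
      rw [this, hye]; ring
    nlinarith [h3, h4, h5]
  have h1x : 0 < 1 - x := by linarith
  have h1y : 0 < 1 - y := by linarith
  have hrhs : (1 - t) + t * ((1 + y) / (1 - y))
      = ((1 - t) * (1 - y) + t * (1 + y)) / (1 - y) := by
    field_simp
  rw [hrhs, div_lt_div_iff₀ h1x h1y]
  nlinarith [key]
end
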